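/- arXiv:2308.06016 — 10 statements merged into one kernel-verified Lean document; each statement's English description precedes it below -/
import Mathlib

section
/- Let G_ω be an edge-weighted simple graph in which at most one edge has non-trivial weight (i.e., weight at least 2). Then the edge ideal I(G_ω) is integrally closed, i.e., I(G_ω) equals its integral closure. -/
open MvPolynomial

/-!
Integral dependence over a monomial ideal is detected by monomial valuations: if the
`λ`-weighted order of every generator is at least `V`, then so is the `λ`-weight of every
monomial of an element of the integral closure, because weighted order is additive on products
of power series over a domain and so the ideal of power series of weighted order `≥ V` is
integrally closed. Hence it suffices to show that an exponent `a` passing all these tests is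
divisible by some generator `x_i^ω x_j^ω`. If every edge meets the complement of the support of
`a`, the indicator of that complement is a failing test. Otherwise some edge `pq` has
`0 < a_p ≤ a_q`; were `a_p < ω(pq)`, this edge would be the unique one of weight `≥ 2`, all other
edges would meet the complement of the support, and a weight concentrated on `p` and on that
complement would fail.
-/

noncomputable def edgeIdeal (K : Type*) [Field K] {n : ℕ}
    (G : SimpleGraph (Fin n)) (w : Sym2 (Fin n) → ℕ) :
    Ideal (MvPolynomial (Fin n) K) :=
  Ideal.span {m | ∃ i j : Fin n, G.Adj i j ∧ m = X i ^ w s(i, j) * X j ^ w s(i, j)}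

def intClosure {R : Type*} [CommRing R] (I : Ideal R) : Set R :=
  {f | ∃ k : ℕ, 0 < k ∧ ∃ c : ℕ → R,
    (∀ i ∈ Finset.Icc 1 k, c i ∈ I ^ i) ∧
    f ^ k + ∑ i ∈ Finset.Icc 1 k, c i * f ^ (k - i) = 0}

def IsIntClosed {R : Type*} [CommRing R] (I : Ideal R) : Prop :=
  intClosure I = ↑I

section IntClosure

variable {R S : Type*} [CommRing R] [CommRing S]

theorem subset_intClosure (I : Ideal R) : (I : Set R) ⊆ intClosure I := by
  intro f hf
  refine ⟨1, one_pos, fun _ => -f, fun i hi => ?_, by simp⟩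
  obtain rfl : i = 1 := by simpa using hi
  simpa using I.neg_mem hf

theorem map_mem_intClosure_of_le_comap (φ : R →+* S) {I : Ideal R} {J : Ideal S}
    (hIJ : I ≤ J.comap φ) {f : R} (hf : f ∈ intClosure I) : φ f ∈ intClosure J := by
  obtain ⟨k, hk, c, hc, heq⟩ := hf
  refine ⟨k, hk, φ ∘ c, fun i hi => ?_, by simpa using congrArg φ heq⟩
  exact Ideal.le_comap_pow φ i (Ideal.pow_right_mono hIJ i (hc i hi))

end IntClosure

namespace MvPowerSeries

variable {σ R : Type*}

theorem weightedOrder_pow [CommSemiring R] [NoZeroDivisors R] [Nontrivial R] (w : σ → ℕ)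
    (f : MvPowerSeries σ R) (k : ℕ) : (f ^ k).weightedOrder w = k • f.weightedOrder w := by
  simpa using weightedOrder_prod w (fun _ => f) (Finset.range k)

variable [CommRing R]

def weightedOrderIdeal (w : σ → ℕ) (V : ℕ) : Ideal (MvPowerSeries σ R) where
  carrier := {f | (V : ℕ∞) ≤ f.weightedOrder w}
  zero_mem' := by simp
  add_mem' hf hg := (le_min hf hg).trans (min_weightedOrder_le_add w)
  smul_mem' _ _ hf := hf.trans (le_add_self.trans (le_weightedOrder_mul w))

variable {w : σ → ℕ}

theorem mem_weightedOrderIdeal {V : ℕ} {f : MvPowerSeries σ R} :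
    f ∈ weightedOrderIdeal w V ↔ (V : ℕ∞) ≤ f.weightedOrder w := Iff.rfl

theorem weightedOrderIdeal_antitone : Antitone (weightedOrderIdeal (R := R) w) :=
  fun _ _ h _ hf => mem_weightedOrderIdeal.mpr ((Nat.cast_le.mpr h).trans hf)

theorem mul_mem_weightedOrderIdeal {u v : ℕ} {f g : MvPowerSeries σ R}
    (hf : f ∈ weightedOrderIdeal w u) (hg : g ∈ weightedOrderIdeal w v) :
    f * g ∈ weightedOrderIdeal w (u + v) := by
  rw [mem_weightedOrderIdeal, Nat.cast_add]
  exact (add_le_add hf hg).trans (le_weightedOrder_mul w)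

theorem weightedOrderIdeal_pow_le (V i : ℕ) :
    weightedOrderIdeal (R := R) w V ^ i ≤ weightedOrderIdeal w (i * V) := by
  induction i with
  | zero => intro f _; simp [mem_weightedOrderIdeal]
  | succ i ih =>
    rw [pow_succ, Ideal.mul_le]
    intro f hf g hg
    rw [add_one_mul]
    exact mul_mem_weightedOrderIdeal (ih hf) hg

/-- If `F` had weighted order `d < V`, then in an equation of integral dependence over this
ideal every term other than `F ^ k` would have order `> k * d`, while `F ^ k` has order `k * d`. -/
theorem isIntClosed_weightedOrderIdeal [IsDomain R] (V : ℕ) :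
    IsIntClosed (weightedOrderIdeal (R := R) w V) := by
  refine Set.Subset.antisymm (fun F hF => ?_) (subset_intClosure _)
  obtain ⟨k, -, c, hc, heq⟩ := hF
  by_contra hFV
  rw [SetLike.mem_coe, mem_weightedOrderIdeal, not_le] at hFV
  obtain ⟨d, hd⟩ : ∃ d : ℕ, F.weightedOrder w = d :=
    (ENat.ne_top_iff_exists.mp hFV.ne_top).imp fun _ h => h.symm
  have hdV : d < V := by rw [hd] at hFV; exact_mod_cast hFV
  have hpow : ∀ m, F ^ m ∈ weightedOrderIdeal w (m * d) := fun m => by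
    simp [mem_weightedOrderIdeal, weightedOrder_pow, hd]
  have hterm : ∀ i ∈ Finset.Icc 1 k, c i * F ^ (k - i) ∈ weightedOrderIdeal w (k * d + 1) := by
    intro i hi
    obtain ⟨hi1, hik⟩ := Finset.mem_Icc.mp hi
    refine weightedOrderIdeal_antitone ?_
      (mul_mem_weightedOrderIdeal (weightedOrderIdeal_pow_le V i (hc i hi)) (hpow (k - i)))
    obtain ⟨j, rfl⟩ : ∃ j, k = i + j := ⟨k - i, by omega⟩
    rw [Nat.add_sub_cancel_left]
    nlinarith
  have hFk : F ^ k ∈ weightedOrderIdeal w (k * d + 1) := by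
    rw [eq_neg_of_add_eq_zero_left heq]
    exact neg_mem (Ideal.sum_mem _ hterm)
  rw [mem_weightedOrderIdeal, weightedOrder_pow, hd, nsmul_eq_mul] at hFk
  exact (Nat.lt_succ_self (k * d)).not_ge (by exact_mod_cast hFk)

end MvPowerSeries

namespace MvPolynomial

variable {σ R : Type*} [CommRing R] [IsDomain R]

theorem le_weight_of_mem_intClosure_span_monomial (w : σ → ℕ) {s : Set (σ →₀ ℕ)} {V : ℕ}
    (hs : ∀ b ∈ s, V ≤ Finsupp.weight w b) {f : MvPolynomial σ R}
    (hf : f ∈ intClosure (Ideal.span ((fun b => monomial b (1 : R)) '' s)))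
    {a : σ →₀ ℕ} (ha : a ∈ f.support) : V ≤ Finsupp.weight w a := by
  have hle : Ideal.span ((fun b => monomial b (1 : R)) '' s) ≤
      (MvPowerSeries.weightedOrderIdeal w V).comap coeToMvPowerSeries.ringHom := by
    rw [Ideal.span_le]
    rintro _ ⟨b, hb, rfl⟩
    simpa [MvPowerSeries.mem_weightedOrderIdeal, coe_monomial,
      MvPowerSeries.weightedOrder_monomial_of_ne_zero] using hs b hb
  have hF := (MvPowerSeries.isIntClosed_weightedOrderIdeal V).subset
    (map_mem_intClosure_of_le_comap _ hle hf)
  have hcoeff : MvPowerSeries.coeff a (f : MvPowerSeries σ R) ≠ 0 := by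
    rwa [coeff_coe, ← mem_support_iff]
  exact_mod_cast hF.trans (MvPowerSeries.weightedOrder_le w hcoeff)

end MvPolynomial

theorem Finsupp.single_add_single_le_iff {σ : Type*} {i j : σ} (hij : i ≠ j) {e : ℕ}
    {a : σ →₀ ℕ} : single i e + single j e ≤ a ↔ e ≤ a i ∧ e ≤ a j := by
  classical
  refine ⟨fun h => ⟨by simpa [hij] using h i, by simpa [hij.symm] using h j⟩, ?_⟩
  rintro ⟨hi, hj⟩ v
  by_cases hvi : v = i
  · subst hvi; simpa [hij] using hi
  · by_cases hvj : v = j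
    · subst hvj; simpa [hvi] using hj
    · simp [Ne.symm hvi, Ne.symm hvj]

theorem Finsupp.weight_single_add_single {σ : Type*} (w : σ → ℕ) (i j : σ) (e : ℕ) :
    weight w (single i e + single j e) = e * (w i + w j) := by
  simp [weight_single, mul_add]

def edgeExponents {σ : Type*} (G : SimpleGraph σ) (w : Sym2 σ → ℕ) : Set (σ →₀ ℕ) :=
  {b | ∃ i j, G.Adj i j ∧ b = Finsupp.single i (w s(i, j)) + Finsupp.single j (w s(i, j))}

section EdgeIdeal

variable {K : Type*} [Field K] {n : ℕ} {G : SimpleGraph (Fin n)} {w : Sym2 (Fin n) → ℕ}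

theorem edgeIdeal_eq_span_monomial :
    edgeIdeal K G w = Ideal.span ((fun b => monomial b (1 : K)) '' edgeExponents G w) := by
  rw [edgeIdeal, Set.image]
  congr 1
  ext m
  simp [edgeExponents, X_pow_eq_monomial, monomial_mul, eq_comm]

theorem mem_edgeIdeal_iff {f : MvPolynomial (Fin n) K} :
    f ∈ edgeIdeal K G w ↔
      ∀ a ∈ f.support, ∃ i j, G.Adj i j ∧ w s(i, j) ≤ a i ∧ w s(i, j) ≤ a j := by
  rw [edgeIdeal_eq_span_monomial, mem_ideal_span_monomial_image]
  refine forall₂_congr fun a _ => ⟨?_, ?_⟩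
  · rintro ⟨_, ⟨i, j, hij, rfl⟩, hle⟩
    exact ⟨i, j, hij, (Finsupp.single_add_single_le_iff hij.ne).mp hle⟩
  · rintro ⟨i, j, hij, hle⟩
    exact ⟨_, ⟨i, j, hij, rfl⟩, (Finsupp.single_add_single_le_iff hij.ne).mpr hle⟩

theorem le_weight_of_mem_intClosure_edgeIdeal {f : MvPolynomial (Fin n) K}
    (hf : f ∈ intClosure (edgeIdeal K G w)) (lam : Fin n → ℕ) {V : ℕ}
    (hV : ∀ i j, G.Adj i j → V ≤ w s(i, j) * (lam i + lam j)) {a : Fin n →₀ ℕ}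
    (ha : a ∈ f.support) : V ≤ Finsupp.weight lam a := by
  rw [edgeIdeal_eq_span_monomial] at hf
  refine le_weight_of_mem_intClosure_span_monomial lam ?_ hf ha
  rintro _ ⟨i, j, hij, rfl⟩
  rw [Finsupp.weight_single_add_single]
  exact hV i j hij

end EdgeIdeal

def SatisfiesEdgeValuations {σ : Type*} (G : SimpleGraph σ) (w : Sym2 σ → ℕ) (a : σ →₀ ℕ) :
    Prop :=
  ∀ (lam : σ → ℕ) (V : ℕ), (∀ i j, G.Adj i j → V ≤ w s(i, j) * (lam i + lam j)) →
    V ≤ Finsupp.weight lam a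

section SatisfiesEdgeValuations

variable {σ : Type*} {G : SimpleGraph σ} {w : Sym2 σ → ℕ} {a : σ →₀ ℕ}

theorem SatisfiesEdgeValuations.exists_adj_ne_zero (hw : ∀ e ∈ G.edgeSet, 1 ≤ w e)
    (ha : SatisfiesEdgeValuations G w a) : ∃ i j, G.Adj i j ∧ a i ≠ 0 ∧ a j ≠ 0 := by
  classical
  by_contra! h
  let lam : σ → ℕ := fun v => if a v = 0 then 1 else 0
  have hV : ∀ i j, G.Adj i j → 1 ≤ w s(i, j) * (lam i + lam j) := by
    intro i j hij
    have h1 := hw s(i, j) hij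
    have hl : 1 ≤ lam i + lam j := by
      by_cases hi : a i = 0 <;> simp [lam, hi, h i j hij]
    exact one_le_mul_of_one_le_of_one_le h1 hl
  have hweight : Finsupp.weight lam a = 0 := by
    rw [Finsupp.weight_apply, Finsupp.sum]
    exact Finset.sum_eq_zero fun v hv => by simp [lam, Finsupp.mem_support_iff.mp hv]
  have := ha lam 1 hV
  omega

theorem SatisfiesEdgeValuations.weight_le_of_adj (hw : ∀ e ∈ G.edgeSet, 1 ≤ w e)
    (ha : SatisfiesEdgeValuations G w a) {p q : σ} (hpq : G.Adj p q) (hp : a p ≠ 0)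
    (hle : a p ≤ a q) (hother : ∀ i j, G.Adj i j → s(i, j) ≠ s(p, q) → a i = 0 ∨ a j = 0) :
    w s(p, q) ≤ a p := by
  classical
  by_contra! hlt
  let lam : σ → ℕ := fun v => if v = p then 1 else if a v = 0 then a p + 1 else 0
  have hlam : ∀ v, a v = 0 → lam v = a p + 1 := fun v hv => by
    simp [lam, hv, show v ≠ p by rintro rfl; exact hp hv]
  have hV : ∀ i j, G.Adj i j → a p + 1 ≤ w s(i, j) * (lam i + lam j) := by
    intro i j hij
    by_cases he : s(i, j) = s(p, q)
    · have hq : a q ≠ 0 := by omega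
      rcases Sym2.eq_iff.mp he with ⟨rfl, rfl⟩ | ⟨rfl, rfl⟩ <;>
        simp [lam, hpq.ne', hq, he] <;> omega
    · have h1 := hw s(i, j) hij
      rcases hother i j hij he with h | h <;> rw [hlam _ h] <;> nlinarith
  have hweight : Finsupp.weight lam a = a p := by
    rw [Finsupp.weight_apply, Finsupp.sum, Finset.sum_eq_single p]
    · simp [lam]
    · intro v hv hvp
      simp [lam, hvp, Finsupp.mem_support_iff.mp hv]
    · intro h
      exact absurd (Finsupp.mem_support_iff.mpr hp) h
  have := ha lam (a p + 1) hV
  omega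

theorem weight_eq_one_of_ne_of_two_le (hw : ∀ e ∈ G.edgeSet, 1 ≤ w e)
    (hone : ∀ e₁ ∈ G.edgeSet, ∀ e₂ ∈ G.edgeSet, 2 ≤ w e₁ → 2 ≤ w e₂ → e₁ = e₂)
    {p q i j : σ} (hpq : G.Adj p q) (h2 : 2 ≤ w s(p, q)) (hij : G.Adj i j)
    (hne : s(i, j) ≠ s(p, q)) : w s(i, j) = 1 := by
  have h1 := hw s(i, j) hij
  by_contra h
  exact hne (hone s(i, j) hij s(p, q) hpq (by omega) h2)

theorem SatisfiesEdgeValuations.exists_adj_weight_le (hw : ∀ e ∈ G.edgeSet, 1 ≤ w e)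
    (hone : ∀ e₁ ∈ G.edgeSet, ∀ e₂ ∈ G.edgeSet, 2 ≤ w e₁ → 2 ≤ w e₂ → e₁ = e₂)
    (ha : SatisfiesEdgeValuations G w a) :
    ∃ i j, G.Adj i j ∧ w s(i, j) ≤ a i ∧ w s(i, j) ≤ a j := by
  by_contra! hnot
  obtain ⟨p, q, hpq, hp, hq⟩ := ha.exists_adj_ne_zero hw
  wlog hle : a p ≤ a q generalizing p q
  · exact this q p hpq.symm hq hp (le_of_not_ge hle)
  have hlt : a p < w s(p, q) := by
    by_contra! h
    exact (hnot p q hpq h).not_ge (h.trans hle)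
  have hother : ∀ i j, G.Adj i j → s(i, j) ≠ s(p, q) → a i = 0 ∨ a j = 0 := by
    intro i j hij hne
    have h1 := weight_eq_one_of_ne_of_two_le hw hone hpq (by omega) hij hne
    by_contra! h
    have := hnot i j hij (by omega)
    omega
  exact hlt.not_ge (ha.weight_le_of_adj hw hpq hp hle hother)

end SatisfiesEdgeValuations

/-- If an edge-weighted graph has at most one edge of non-trivial weight (weight ≥ 2),
then its edge ideal is integrally closed. -/
theorem edgeIdeal_isIntClosed_of_at_most_one_nontrivial_edge
    (K : Type*) [Field K] {n : ℕ} (G : SimpleGraph (Fin n))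
    (w : Sym2 (Fin n) → ℕ) (hw : ∀ e ∈ G.edgeSet, 1 ≤ w e)
    (hone : ∀ e₁ ∈ G.edgeSet, ∀ e₂ ∈ G.edgeSet, 2 ≤ w e₁ → 2 ≤ w e₂ → e₁ = e₂) :
    IsIntClosed (edgeIdeal K G w) := by
  refine Set.Subset.antisymm (fun f hf => ?_) (subset_intClosure _)
  rw [SetLike.mem_coe, mem_edgeIdeal_iff]
  intro a ha
  exact SatisfiesEdgeValuations.exists_adj_weight_le hw hone
    fun lam _ hV => le_weight_of_mem_intClosure_edgeIdeal hf lam hV ha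
end

section
/- Let G_ω be an edge-weighted graph and H_ω an induced subgraph of G_ω, and let k be a positive integer. If the power I(G_ω)^k is integrally closed, then I(H_ω)^k is also integrally closed. -/
open MvPolynomial

/-- `(H, wH)` is an induced (weighted) subgraph of `(G, wG)`: there is a vertex subset `A`
such that the edges of `H` are exactly the edges of `G` with both endpoints in `A`,
and weights of edges of `H` agree with those in `G`. -/
def IsInducedWeightedSubgraph {n : ℕ} (G : SimpleGraph (Fin n)) (wG : Sym2 (Fin n) → ℕ)
    (H : SimpleGraph (Fin n)) (wH : Sym2 (Fin n) → ℕ) : Prop :=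
  ∃ A : Set (Fin n), (∀ i j : Fin n, H.Adj i j ↔ (i ∈ A ∧ j ∈ A ∧ G.Adj i j)) ∧
    (∀ i j : Fin n, H.Adj i j → wH s(i, j) = wG s(i, j))

/-!
If `f` is integral over a monomial ideal `J`, so is each of its monomials `x^α`. Suppose first
that the coefficient domain contains elements `c_j` whose monomials `c^γ` are pairwise distinct.
The substitution `τ : x_j ↦ c_j x_j` maps `J` into itself and multiplies the coefficient of `x^γ`
by `c^γ`, so for another monomial `x^β` of `f` the element `τ f - c^β f` is again integral over
`J`, has lost `x^β` and kept `x^α`; induction on the support reduces to `f = a x^α`. In general,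
extend the coefficients from `R` to `R[x]`, where `c_j = x_j` works. Integral dependence over `J`
survives these operations because `f` is integral over `J` exactly when `f t` is integral over
the Rees algebra `R[J t]`.

For the theorem let `A` be the vertex set of `H` and `x^α` a monomial of `f`, integral over
`I(H)^k`. Sending the variables outside `A` to `1` fixes `I(H)`, so `x^{α_A}` is integral over
`I(H)^k ⊆ I(G)^k`, hence lies in `I(G)^k`. Sending them to `0` maps `I(G)` into `I(H)`, since
every edge of `G` leaving `A` has positive weight; so `x^{α_A}`, and with it `x^α`, lies in
`I(H)^k`.
-/

section IntClosure

open scoped Polynomial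

variable {R : Type*} [CommRing R] {J : Ideal R}

theorem mem_intClosure_of_mem {f : R} (hf : f ∈ J) : f ∈ intClosure J := by
  refine ⟨1, one_pos, fun _ => -f, fun i hi => ?_, by simp⟩
  obtain rfl : i = 1 := by simpa using hi
  simpa using J.neg_mem hf

theorem mem_intClosure_of_pow_mem_pow {f : R} {i : ℕ} (hi : 0 < i) (hf : f ^ i ∈ J ^ i) :
    f ∈ intClosure J := by
  refine ⟨i, hi, fun j => if j = i then -f ^ i else 0, fun j _ => ?_, ?_⟩
  · dsimp only
    split_ifs with hj
    · rw [hj]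
      exact neg_mem hf
    · exact zero_mem _
  · rw [Finset.sum_eq_single_of_mem i (by simp [Nat.one_le_of_lt hi]) (fun j _ hj => by simp [hj])]
    simp

theorem intClosure_mono {J' : Ideal R} (h : J ≤ J') : intClosure J ⊆ intClosure J' :=
  fun _ ⟨k, hk, c, hc, he⟩ => ⟨k, hk, c, fun i hi => Ideal.pow_right_mono h i (hc i hi), he⟩

theorem map_mem_intClosure {S F : Type*} [CommRing S] [FunLike F R S] [RingHomClass F R S]
    (φ : F) {J' : Ideal S} (h : J.map φ ≤ J') {f : R} (hf : f ∈ intClosure J) :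
    φ f ∈ intClosure J' := by
  obtain ⟨k, hk, c, hc, he⟩ := hf
  refine ⟨k, hk, fun i => φ (c i), fun i hi => ?_, ?_⟩
  · exact Ideal.pow_right_mono h i (Ideal.map_pow φ J i ▸ Ideal.mem_map_of_mem φ (hc i hi))
  · simpa using congrArg φ he

theorem sum_Icc_one_eq_sum_range_sub {M : Type*} [AddCommMonoid M] (g : ℕ → M) (k : ℕ) :
    ∑ j ∈ Finset.Icc 1 k, g j = ∑ i ∈ Finset.range k, g (k - i) := by
  refine Finset.sum_nbij' (k - ·) (k - ·) ?_ ?_ ?_ ?_ ?_ <;> intro j hj <;>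
    simp only [Finset.mem_Icc, Finset.mem_range] at hj ⊢
  all_goals first | omega | rw [Nat.sub_sub_self hj.2]

theorem mem_intClosure_iff_exists_sum_range {f : R} :
    f ∈ intClosure J ↔ ∃ k, 0 < k ∧ ∃ a : ℕ → R,
      (∀ i, a i ∈ J ^ (k - i)) ∧ f ^ k + ∑ i ∈ Finset.range k, a i * f ^ i = 0 := by
  constructor
  · rintro ⟨k, hk, c, hc, he⟩
    refine ⟨k, hk, fun i => c (k - i), fun i => ?_, ?_⟩
    · rcases lt_or_ge i k with hi | hi
      · exact hc _ (Finset.mem_Icc.2 ⟨by omega, by omega⟩)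
      · simp [Nat.sub_eq_zero_of_le hi]
    rw [← he, sum_Icc_one_eq_sum_range_sub]
    congr 1
    refine Finset.sum_congr rfl fun i hi => ?_
    rw [Nat.sub_sub_self (Finset.mem_range.1 hi).le]
  · rintro ⟨k, hk, a, ha, he⟩
    refine ⟨k, hk, fun j => a (k - j), fun j hj => ?_, ?_⟩
    · simp only [Finset.mem_Icc] at hj
      simpa [Nat.sub_sub_self hj.2] using ha (k - j)
    · rw [sum_Icc_one_eq_sum_range_sub, ← he]
      congr 1
      refine Finset.sum_congr rfl fun i hi => ?_
      simp only [Nat.sub_sub_self (Finset.mem_range.1 hi).le]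

theorem isIntegral_C_mul_X_of_mem_intClosure {f : R} (hf : f ∈ intClosure J) :
    IsIntegral (reesAlgebra J) (Polynomial.C f * Polynomial.X) := by
  obtain ⟨k, -, a, ha, he⟩ := mem_intClosure_iff_exists_sum_range.1 hf
  let b : ℕ → reesAlgebra J := fun i =>
    ⟨Polynomial.monomial (k - i) (a i), reesAlgebra.monomial_mem.2 (ha i)⟩
  refine ⟨Polynomial.X ^ k + ∑ i ∈ Finset.range k, Polynomial.C (b i) * Polynomial.X ^ i,
    Polynomial.monic_X_pow_add ?_, ?_⟩
  · simp_rw [← Fin.sum_univ_eq_sum_range, Polynomial.degree_sum_fin_lt]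
  have hterm : ∀ i ∈ Finset.range k, algebraMap (reesAlgebra J) R[X] (b i) *
      (Polynomial.C f * Polynomial.X) ^ i = Polynomial.C (a i * f ^ i) * Polynomial.X ^ k := by
    intro i hi
    change Polynomial.monomial (k - i) (a i) * _ = _
    rw [← Polynomial.C_mul_X_pow_eq_monomial, mul_pow, ← Polynomial.C_pow, Polynomial.C_mul,
      ← Nat.sub_add_cancel (Finset.mem_range.1 hi).le, pow_add, Nat.add_sub_cancel]
    ring
  simp only [Polynomial.eval₂_add, Polynomial.eval₂_X_pow, Polynomial.eval₂_finsetSum,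
    Polynomial.eval₂_mul, Polynomial.eval₂_C, Polynomial.eval₂_X_pow]
  rw [Finset.sum_congr rfl hterm, ← Finset.sum_mul, mul_pow, ← Polynomial.C_pow, ← add_mul,
    ← map_sum, ← Polynomial.C_add, he, Polynomial.C_0, zero_mul]

theorem mem_intClosure_of_isIntegral [Nontrivial R] {f : R}
    (hf : IsIntegral (reesAlgebra J) (Polynomial.C f * Polynomial.X)) : f ∈ intClosure J := by
  obtain ⟨P, hP, hPf⟩ := hf
  set d := P.natDegree
  have hd : 0 < d := by
    refine Nat.pos_of_ne_zero fun h0 => ?_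
    rw [hP.natDegree_eq_zero.1 h0, Polynomial.eval₂_one] at hPf
    exact one_ne_zero hPf
  refine mem_intClosure_iff_exists_sum_range.2 ⟨d, hd, fun i => (P.coeff i : R[X]).coeff (d - i),
    fun i => (P.coeff i).2 (d - i), ?_⟩
  have hterm : ∀ i ∈ Finset.range d, (algebraMap (reesAlgebra J) R[X] (P.coeff i) *
      (Polynomial.C f * Polynomial.X) ^ i).coeff d = (P.coeff i : R[X]).coeff (d - i) * f ^ i := by
    intro i hi
    rw [mul_pow, ← Polynomial.C_pow, ← mul_assoc, Polynomial.coeff_mul_X_pow',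
      if_pos (Finset.mem_range.1 hi).le, Polynomial.coeff_mul_C]
    rfl
  have hcoeff := congrArg (Polynomial.coeff · d) hPf
  rw [hP.as_sum] at hcoeff
  simp only [Polynomial.eval₂_add, Polynomial.eval₂_X_pow, Polynomial.eval₂_finsetSum,
    Polynomial.eval₂_mul, Polynomial.eval₂_C, Polynomial.coeff_add, Polynomial.finsetSum_coeff,
    Polynomial.coeff_zero] at hcoeff
  rwa [Finset.sum_congr rfl hterm, mul_pow, ← Polynomial.C_pow, Polynomial.coeff_C_mul_X_pow,
    if_pos rfl] at hcoeff

theorem sub_mem_intClosure [Nontrivial R] {f g : R} (hf : f ∈ intClosure J)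
    (hg : g ∈ intClosure J) : f - g ∈ intClosure J :=
  mem_intClosure_of_isIntegral <| by
    simpa only [Polynomial.C_sub, sub_mul] using
      (isIntegral_C_mul_X_of_mem_intClosure hf).sub (isIntegral_C_mul_X_of_mem_intClosure hg)

theorem mul_mem_intClosure [Nontrivial R] (g : R) {f : R} (hf : f ∈ intClosure J) :
    g * f ∈ intClosure J := by
  have hg : Polynomial.C g ∈ reesAlgebra J := by
    simpa using reesAlgebra.monomial_mem (I := J) (i := 0) (r := g)
  refine mem_intClosure_of_isIntegral ?_
  rw [Polynomial.C_mul, mul_assoc]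
  exact (isIntegral_algebraMap (x := (⟨_, hg⟩ : reesAlgebra J))).mul
      (isIntegral_C_mul_X_of_mem_intClosure hf)

end IntClosure

section MonomialIdeal

variable {σ R : Type*} [CommSemiring R]

def IsMonomialIdeal (J : Ideal (MvPolynomial σ R)) : Prop :=
  ∃ M : Set (σ →₀ ℕ), J = Ideal.span ((fun d => monomial d 1) '' M)

theorem isMonomialIdeal_span {S : Set (MvPolynomial σ R)}
    (hS : ∀ s ∈ S, ∃ d, s = monomial d 1) : IsMonomialIdeal (Ideal.span S) := by
  refine ⟨{d | monomial d 1 ∈ S}, congrArg _ (Set.ext fun s => ⟨fun hs => ?_, ?_⟩)⟩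
  · obtain ⟨d, rfl⟩ := hS s hs
    exact ⟨d, hs, rfl⟩
  · rintro ⟨d, hd, rfl⟩
    exact hd

variable {J J' : Ideal (MvPolynomial σ R)}

theorem mem_of_forall_monomial_one_mem {f : MvPolynomial σ R}
    (h : ∀ α ∈ f.support, monomial α 1 ∈ J) : f ∈ J := by
  rw [f.as_sum]
  refine Ideal.sum_mem _ fun α hα => ?_
  rw [← mul_one (coeff α f), ← C_mul_monomial]
  exact Ideal.mul_mem_left _ _ (h α hα)

theorem IsMonomialIdeal.mul (hJ : IsMonomialIdeal J) (hJ' : IsMonomialIdeal J') :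
    IsMonomialIdeal (J * J') := by
  obtain ⟨M, rfl⟩ := hJ
  obtain ⟨M', rfl⟩ := hJ'
  rw [Ideal.span_mul_span']
  refine isMonomialIdeal_span ?_
  rintro _ ⟨_, ⟨d, -, rfl⟩, _, ⟨d', -, rfl⟩, rfl⟩
  exact ⟨d + d', by simp only [monomial_mul, one_mul]⟩

theorem IsMonomialIdeal.pow (hJ : IsMonomialIdeal J) (i : ℕ) : IsMonomialIdeal (J ^ i) := by
  induction i with
  | zero => exact ⟨{0}, by simp [Ideal.one_eq_top]⟩
  | succ i ih => exact pow_succ J i ▸ ih.mul hJ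

theorem IsMonomialIdeal.monomial_mem_of_mem_support (hJ : IsMonomialIdeal J)
    {p : MvPolynomial σ R} (hp : p ∈ J) {β : σ →₀ ℕ} (hβ : β ∈ p.support) :
    monomial β 1 ∈ J := by
  obtain ⟨M, rfl⟩ := hJ
  obtain ⟨d, hd, hdβ⟩ := mem_ideal_span_monomial_image.1 hp β hβ
  rw [show monomial β (1 : R) = monomial (β - d) 1 * monomial d 1 by
    rw [monomial_mul, one_mul, tsub_add_cancel_of_le hdβ]]
  exact Ideal.mul_mem_left _ _ (Ideal.subset_span ⟨d, hd, rfl⟩)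

theorem IsMonomialIdeal.map {S : Type*} [CommSemiring S] (hJ : IsMonomialIdeal J) (f : R →+* S) :
    IsMonomialIdeal (J.map (MvPolynomial.map f)) := by
  obtain ⟨M, rfl⟩ := hJ
  rw [Ideal.map_span, Set.image_image]
  exact ⟨M, by simp only [map_monomial, map_one]⟩

theorem aeval_C_mul_X_monomial (c : σ → R) (d : σ →₀ ℕ) (a : R) :
    aeval (fun j => C (c j) * X j) (monomial d a) =
      monomial d ((d.prod fun j e => c j ^ e) * a) := by
  rw [aeval_monomial, monomial_eq]
  simp only [algebraMap_eq, mul_pow, Finsupp.prod_mul, C_mul, map_finsuppProd, C_pow]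
  ring

theorem coeff_aeval_C_mul_X (c : σ → R) (f : MvPolynomial σ R) (γ : σ →₀ ℕ) :
    coeff γ (aeval (fun j => C (c j) * X j) f) = (γ.prod fun j e => c j ^ e) * coeff γ f := by
  classical
  induction f using MvPolynomial.induction_on' with
  | monomial d a =>
    rw [aeval_C_mul_X_monomial, coeff_monomial, coeff_monomial]
    split_ifs with h
    · rw [h]
    · rw [mul_zero]
  | add p q hp hq => rw [map_add, coeff_add, coeff_add, hp, hq, mul_add]

theorem IsMonomialIdeal.map_aeval_C_mul_X_le (hJ : IsMonomialIdeal J) (c : σ → R) :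
    J.map (aeval fun j => C (c j) * X j) ≤ J := by
  obtain ⟨M, rfl⟩ := hJ
  rw [Ideal.map_span, Ideal.span_le]
  rintro _ ⟨_, ⟨d, hd, rfl⟩, rfl⟩
  rw [aeval_C_mul_X_monomial, mul_one, ← mul_one (d.prod fun j e => c j ^ e), ← C_mul_monomial]
  exact Ideal.mul_mem_left _ _ (Ideal.subset_span ⟨d, hd, rfl⟩)

end MonomialIdeal

section IntClosureMonomial

variable {σ R : Type*} [CommRing R] [IsDomain R] {J : Ideal (MvPolynomial σ R)}

theorem IsMonomialIdeal.monomial_one_mem_intClosure_of_monomial_mem (hJ : IsMonomialIdeal J)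
    {α : σ →₀ ℕ} {a : R} (ha : a ≠ 0) (h : monomial α a ∈ intClosure J) :
    monomial α 1 ∈ intClosure J := by
  classical
  obtain ⟨k, -, c, hc, he⟩ := h
  obtain ⟨i, hi, hci⟩ : ∃ i ∈ Finset.Icc 1 k, coeff (i • α) (c i) ≠ 0 := by
    by_contra! h0
    have hterm : ∀ i ∈ Finset.Icc 1 k, coeff (k • α) (c i * monomial α a ^ (k - i)) = 0 := by
      intro i hi
      rw [monomial_pow, ← Nat.sub_add_cancel (Finset.mem_Icc.1 hi).2, add_smul,
        Nat.add_sub_cancel, add_comm, coeff_mul_monomial, h0 i hi, zero_mul]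
    have hcoeff := congrArg (coeff (k • α)) he
    rw [coeff_add, coeff_sum, Finset.sum_eq_zero hterm, add_zero, monomial_pow, coeff_monomial,
      if_pos rfl, coeff_zero] at hcoeff
    exact pow_ne_zero k ha hcoeff
  refine mem_intClosure_of_pow_mem_pow (Finset.mem_Icc.1 hi).1 ?_
  rw [monomial_pow, one_pow]
  exact (hJ.pow i).monomial_mem_of_mem_support (hc i hi) (mem_support_iff.2 hci)

theorem IsMonomialIdeal.monomial_mem_intClosure_of_injective (hJ : IsMonomialIdeal J) {c : σ → R}
    (hc : Function.Injective fun d : σ →₀ ℕ => d.prod fun j e => c j ^ e)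
    {f : MvPolynomial σ R} (hf : f ∈ intClosure J) {α : σ →₀ ℕ} (hα : α ∈ f.support) :
    monomial α 1 ∈ intClosure J := by
  classical
  induction hN : f.support.card using Nat.strong_induction_on generalizing f with
  | _ N ih =>
  by_cases hmulti : ∃ β ∈ f.support, β ≠ α
  swap
  · have hfα : f = monomial α (coeff α f) := by
      ext β
      rw [coeff_monomial]
      split_ifs with h
      · rw [h]
      · exact notMem_support_iff.1 fun hβ => hmulti ⟨β, hβ, Ne.symm h⟩
    exact hJ.monomial_one_mem_intClosure_of_monomial_mem (mem_support_iff.1 hα) (hfα ▸ hf)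
  obtain ⟨β, hβ, hβα⟩ := hmulti
  set w := fun d : σ →₀ ℕ => d.prod fun j e => c j ^ e
  set g := aeval (fun j => C (c j) * X j) f - C (w β) * f
  have hg : g ∈ intClosure J :=
    sub_mem_intClosure (map_mem_intClosure _ (hJ.map_aeval_C_mul_X_le c) hf)
      (mul_mem_intClosure _ hf)
  have hcoeff : ∀ γ, coeff γ g = (w γ - w β) * coeff γ f := fun γ => by
    simp only [g, coeff_sub, coeff_aeval_C_mul_X, coeff_C_mul, sub_mul, w]
  have hsupp : g.support ⊆ f.support.erase β := by
    intro γ hγ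
    rw [mem_support_iff, hcoeff] at hγ
    refine Finset.mem_erase.2 ⟨?_, mem_support_iff.2 (right_ne_zero_of_mul hγ)⟩
    rintro rfl
    simp at hγ
  have hαg : α ∈ g.support := by
    rw [mem_support_iff, hcoeff]
    exact mul_ne_zero (sub_ne_zero.2 (hc.ne hβα.symm)) (mem_support_iff.1 hα)
  have hcard : g.support.card < N :=
    hN ▸ (Finset.card_le_card hsupp).trans_lt (Finset.card_erase_lt_of_mem hβ)
  exact ih _ hcard hg hαg rfl

theorem IsMonomialIdeal.monomial_mem_intClosure (hJ : IsMonomialIdeal J)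
    {f : MvPolynomial σ R} (hf : f ∈ intClosure J) {α : σ →₀ ℕ} (hα : α ∈ f.support) :
    monomial α 1 ∈ intClosure J := by
  let ι := MvPolynomial.map (σ := σ) (C : R →+* MvPolynomial σ R)
  let ρ := MvPolynomial.map (σ := σ) (constantCoeff : MvPolynomial σ R →+* R)
  have hρι : ρ.comp ι = RingHom.id _ := by
    ext <;> simp [ρ, ι]
  have hinj : Function.Injective fun d : σ →₀ ℕ =>
      d.prod fun j e => (X j : MvPolynomial σ R) ^ e := by
    simpa [monomial_eq] using monomial_left_injective (σ := σ) (one_ne_zero (α := R))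
  have h := (hJ.map C).monomial_mem_intClosure_of_injective hinj (map_mem_intClosure ι le_rfl hf)
    (by rwa [support_map_of_injective _ (C_injective σ R)])
  simpa [ρ] using map_mem_intClosure ρ (by rw [Ideal.map_map, hρι, Ideal.map_id]) h

end IntClosureMonomial

section Substitution

variable {σ R : Type*} [CommSemiring R] {g : σ → MvPolynomial σ R} {d : σ →₀ ℕ}

theorem aeval_monomial_one_of_forall_eq_X (h : ∀ v ∈ d.support, g v = X v) :
    aeval g (monomial d (1 : R)) = monomial d 1 := by
  rw [aeval_monomial, map_one, one_mul, monomial_eq, C_1, one_mul]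
  exact Finsupp.prod_congr fun v hv => by rw [h v hv]

theorem aeval_monomial_one_of_forall_eq_one (h : ∀ v ∈ d.support, g v = 1) :
    aeval g (monomial d (1 : R)) = 1 := by
  rw [aeval_monomial, map_one, one_mul]
  exact Finset.prod_eq_one fun v hv => by simp only [h v hv, one_pow]

end Substitution

section EdgeIdeal

variable (K : Type*) [Field K] {n : ℕ}

theorem isMonomialIdeal_edgeIdeal (G : SimpleGraph (Fin n)) (w : Sym2 (Fin n) → ℕ) :
    IsMonomialIdeal (edgeIdeal K G w) :=
  isMonomialIdeal_span <| by
    rintro _ ⟨i, j, -, rfl⟩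
    exact ⟨Finsupp.single i (w s(i, j)) + Finsupp.single j (w s(i, j)),
      by rw [X_pow_eq_monomial, X_pow_eq_monomial, monomial_mul, one_mul]⟩

variable {K} {G H : SimpleGraph (Fin n)} {wG wH : Sym2 (Fin n) → ℕ}

theorem edgeIdeal_le_of_isInducedWeightedSubgraph (h : IsInducedWeightedSubgraph G wG H wH) :
    edgeIdeal K H wH ≤ edgeIdeal K G wG := by
  obtain ⟨A, hA, hw⟩ := h
  refine Ideal.span_mono ?_
  rintro _ ⟨i, j, hij, rfl⟩
  exact ⟨i, j, ((hA i j).1 hij).2.2, by rw [hw i j hij]⟩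

theorem map_aeval_edgeIdeal_le_self {A : Set (Fin n)} (hA : ∀ i j, H.Adj i j → i ∈ A ∧ j ∈ A)
    {g : Fin n → MvPolynomial (Fin n) K} (hg : ∀ v ∈ A, g v = X v) :
    (edgeIdeal K H wH).map (aeval g) ≤ edgeIdeal K H wH := by
  rw [edgeIdeal, Ideal.map_span, Ideal.span_le]
  rintro _ ⟨_, ⟨i, j, hij, rfl⟩, rfl⟩
  rw [map_mul, map_pow, map_pow, aeval_X, aeval_X, hg i (hA i j hij).1, hg j (hA i j hij).2]
  exact Ideal.subset_span ⟨i, j, hij, rfl⟩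

theorem map_aeval_edgeIdeal_le {A : Set (Fin n)}
    (hA : ∀ i j, H.Adj i j ↔ i ∈ A ∧ j ∈ A ∧ G.Adj i j)
    (hw : ∀ i j, H.Adj i j → wH s(i, j) = wG s(i, j)) (hwG : ∀ e ∈ G.edgeSet, 1 ≤ wG e)
    {g : Fin n → MvPolynomial (Fin n) K} (hgA : ∀ v ∈ A, g v = X v) (hg0 : ∀ v ∉ A, g v = 0) :
    (edgeIdeal K G wG).map (aeval g) ≤ edgeIdeal K H wH := by
  rw [edgeIdeal, Ideal.map_span, Ideal.span_le]
  rintro _ ⟨_, ⟨i, j, hij, rfl⟩, rfl⟩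
  have hpos : wG s(i, j) ≠ 0 := Nat.one_le_iff_ne_zero.1 (hwG _ (G.mem_edgeSet.2 hij))
  rw [SetLike.mem_coe, map_mul, map_pow, map_pow, aeval_X, aeval_X]
  by_cases hiA : i ∈ A
  · by_cases hjA : j ∈ A
    · have hH := (hA i j).2 ⟨hiA, hjA, hij⟩
      rw [hgA i hiA, hgA j hjA, ← hw i j hH]
      exact Ideal.subset_span ⟨i, j, hH, rfl⟩
    · rw [hg0 j hjA, zero_pow hpos, mul_zero]
      exact zero_mem _
  · rw [hg0 i hiA, zero_pow hpos, zero_mul]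
    exact zero_mem _

variable {A : Set (Fin n)} {k : ℕ}

theorem monomial_filter_mem_intClosure [DecidablePred (· ∈ A)]
    (hA : ∀ i j, H.Adj i j → i ∈ A ∧ j ∈ A) {α : Fin n →₀ ℕ}
    (hα : monomial α 1 ∈ intClosure (edgeIdeal K H wH ^ k)) :
    monomial (α.filter (· ∈ A)) 1 ∈ intClosure (edgeIdeal K H wH ^ k) := by
  let φ : MvPolynomial (Fin n) K →ₐ[K] MvPolynomial (Fin n) K :=
    aeval fun v => if v ∈ A then X v else 1
  have hφ : (edgeIdeal K H wH ^ k).map φ ≤ edgeIdeal K H wH ^ k := by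
    rw [Ideal.map_pow]
    exact Ideal.pow_right_mono (map_aeval_edgeIdeal_le_self hA (by simp +contextual)) k
  have h := map_mem_intClosure φ hφ hα
  rwa [← Finsupp.filter_add_filter_not α (· ∈ A), ← one_mul (1 : K), ← monomial_mul, map_mul,
    aeval_monomial_one_of_forall_eq_X (by simp +contextual),
    aeval_monomial_one_of_forall_eq_one (by simp +contextual), mul_one] at h

theorem monomial_mem_pow_edgeIdeal_of_induced
    (hA : ∀ i j, H.Adj i j ↔ i ∈ A ∧ j ∈ A ∧ G.Adj i j)
    (hw : ∀ i j, H.Adj i j → wH s(i, j) = wG s(i, j)) (hwG : ∀ e ∈ G.edgeSet, 1 ≤ wG e)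
    {d : Fin n →₀ ℕ} (hd : ∀ v ∈ d.support, v ∈ A) (h : monomial d 1 ∈ edgeIdeal K G wG ^ k) :
    monomial d 1 ∈ edgeIdeal K H wH ^ k := by
  classical
  let ψ : MvPolynomial (Fin n) K →ₐ[K] MvPolynomial (Fin n) K :=
    aeval fun v => if v ∈ A then X v else 0
  have hψ := Ideal.mem_map_of_mem ψ h
  rw [aeval_monomial_one_of_forall_eq_X (by simp +contextual [hd]), Ideal.map_pow] at hψ
  exact Ideal.pow_right_mono
    (map_aeval_edgeIdeal_le hA hw hwG (by simp +contextual) (by simp +contextual)) k hψ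

end EdgeIdeal

theorem pow_edgeIdeal_induced_isIntClosed_general
    (K : Type*) [Field K] {n : ℕ} (G H : SimpleGraph (Fin n))
    (wG wH : Sym2 (Fin n) → ℕ)
    (hwG : ∀ e ∈ G.edgeSet, 1 ≤ wG e)
    (hind : IsInducedWeightedSubgraph G wG H wH)
    (k : ℕ)
    (hG : IsIntClosed (edgeIdeal K G wG ^ k)) :
    IsIntClosed (edgeIdeal K H wH ^ k) := by
  classical
  have hHG := edgeIdeal_le_of_isInducedWeightedSubgraph (K := K) hind
  obtain ⟨A, hA, hw⟩ := hind
  refine Set.Subset.antisymm (fun f hf => mem_of_forall_monomial_one_mem fun α hα => ?_)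
    fun f hf => mem_intClosure_of_mem hf
  have hαH := ((isMonomialIdeal_edgeIdeal K H wH).pow k).monomial_mem_intClosure hf hα
  have hαA : monomial (α.filter (· ∈ A)) 1 ∈ edgeIdeal K G wG ^ k := by
    rw [← SetLike.mem_coe, ← hG]
    exact intClosure_mono (Ideal.pow_right_mono hHG k) <|
      monomial_filter_mem_intClosure (fun i j h => ((hA i j).1 h).imp_right And.left) hαH
  rw [← Finsupp.filter_add_filter_not α (· ∈ A), ← one_mul (1 : K), ← monomial_mul]
  exact Ideal.mul_mem_right _ _
    (monomial_mem_pow_edgeIdeal_of_induced hA hw hwG (by simp +contextual) hαA)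

/-- If `H_ω` is an induced subgraph of `G_ω` and `I(G_ω)^k` is integrally closed
(`k ≥ 1`), then `I(H_ω)^k` is integrally closed. -/
theorem pow_edgeIdeal_induced_isIntClosed
    (K : Type*) [Field K] {n : ℕ} (G H : SimpleGraph (Fin n))
    (wG wH : Sym2 (Fin n) → ℕ)
    (hwG : ∀ e ∈ G.edgeSet, 1 ≤ wG e) (hwH : ∀ e ∈ H.edgeSet, 1 ≤ wH e)
    (hind : IsInducedWeightedSubgraph G wG H wH)
    (k : ℕ) (hk : 0 < k)
    (hG : IsIntClosed (edgeIdeal K G wG ^ k)) :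
    IsIntClosed (edgeIdeal K H wH ^ k) :=
  pow_edgeIdeal_induced_isIntClosed_general K G H wG wH hwG hind k hG
end

section
/- Let G_ω be the edge-weighted path on vertex set {1,2,3} with edges {1,2} and {2,3}, where both edges have weight at least 2. Then I(G_ω) ≠ its integral closure; i.e., the edge ideal I(G_ω) = (x_1^{ω_1} x_2^{ω_1}, x_2^{ω_2} x_3^{ω_2}) with ω_1, ω_2 ≥ 2 is not integrally closed. In fact, the monomial x_1^{ω_1−1} x_2^{ω_1+ω_2} x_3^{ω_2−1} lies in the integral closure of I(G_ω) but not in I(G_ω). -/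
open MvPolynomial

/-- For the weighted path `1 - 2 - 3` with both edge weights `ω₁, ω₂ ≥ 2`, the edge ideal
`I = (x₁^{ω₁} x₂^{ω₁}, x₂^{ω₂} x₃^{ω₂})` is not integrally closed: the monomial
`x₁^{ω₁-1} x₂^{ω₁+ω₂} x₃^{ω₂-1}` lies in the integral closure of `I` but not in `I`. -/
theorem weighted_path3_not_intClosed
    (K : Type*) [Field K] (ω₁ ω₂ : ℕ) (h1 : 2 ≤ ω₁) (h2 : 2 ≤ ω₂)
    (I : Ideal (MvPolynomial (Fin 3) K))
    (hI : I = Ideal.span {X 0 ^ ω₁ * X 1 ^ ω₁, X 1 ^ ω₂ * X 2 ^ ω₂}) :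
    (X 0 ^ (ω₁ - 1) * X 1 ^ (ω₁ + ω₂) * X 2 ^ (ω₂ - 1) ∈ intClosure I) ∧
    (X 0 ^ (ω₁ - 1) * X 1 ^ (ω₁ + ω₂) * X 2 ^ (ω₂ - 1) ∉ I) ∧
    ¬ IsIntClosed I := by
  obtain ⟨a, rfl⟩ := Nat.exists_eq_add_of_le h1
  obtain ⟨b, rfl⟩ := Nat.exists_eq_add_of_le h2
  set R := MvPolynomial (Fin 3) K
  set g₁ : R := X 0 ^ (2 + a) * X 1 ^ (2 + a) with hg1
  set g₂ : R := X 1 ^ (2 + b) * X 2 ^ (2 + b) with hg2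
  set f : R := X 0 ^ (2 + a - 1) * X 1 ^ ((2 + a) + (2 + b)) * X 2 ^ (2 + b - 1) with hf
  have hsub1 : 2 + a - 1 = a + 1 := by omega
  have hsub2 : 2 + b - 1 = b + 1 := by omega
  have hg1I : g₁ ∈ I := by rw [hI]; exact Ideal.subset_span (by simp)
  have hg2I : g₂ ∈ I := by rw [hI]; exact Ideal.subset_span (by simp [Set.mem_insert_iff])
  have hfsq : f ^ 2 = (X 0 ^ a * X 1 ^ ((2+a)+(2+b)) * X 2 ^ b) * (g₁ * g₂) := by
    rw [hf, hg1, hg2, hsub1, hsub2]; ring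
  have hfsqI : f ^ 2 ∈ I ^ 2 := by
    rw [hfsq, sq]
    exact Ideal.mul_mem_left _ _ (Ideal.mul_mem_mul hg1I hg2I)
  have hmemcl : f ∈ intClosure I := by
    refine ⟨2, by norm_num, fun i => if i = 2 then -(f^2) else 0, ?_, ?_⟩
    · intro i hi
      simp only [Finset.mem_Icc] at hi
      obtain ⟨hlo, hhi⟩ := hi
      interval_cases i
      · simp
      · simpa using (I ^ 2).neg_mem hfsqI
    · rw [show Finset.Icc 1 2 = {1, 2} from rfl]
      simp
  have hnotmem : f ∉ I := by
    rw [hI, Ideal.mem_span_pair]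
    rintro ⟨u, v, huv⟩
    have := congrArg (coeff (Finsupp.single 0 (a+1) + Finsupp.single 1 ((2+a)+(2+b)) + Finsupp.single 2 (b+1))) huv
    rw [coeff_add] at this
    rw [hg1, hg2, hf, hsub1, hsub2] at this
    rw [show (X 0 ^ (2+a) * X 1 ^ (2+a) : R) = monomial (Finsupp.single 0 (2+a) + Finsupp.single 1 (2+a)) 1 by
        rw [X_pow_eq_monomial, X_pow_eq_monomial, monomial_mul, one_mul],
      show (X 1 ^ (2+b) * X 2 ^ (2+b) : R) = monomial (Finsupp.single 1 (2+b) + Finsupp.single 2 (2+b)) 1 by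
        rw [X_pow_eq_monomial, X_pow_eq_monomial, monomial_mul, one_mul],
      show (X 0 ^ (a+1) * X 1 ^ ((2+a)+(2+b)) * X 2 ^ (b+1) : R)
          = monomial (Finsupp.single 0 (a+1) + Finsupp.single 1 ((2+a)+(2+b)) + Finsupp.single 2 (b+1)) 1 by
        rw [X_pow_eq_monomial, X_pow_eq_monomial, X_pow_eq_monomial, monomial_mul, monomial_mul, one_mul, one_mul],
      coeff_mul_monomial', coeff_mul_monomial', coeff_monomial] at this
    rw [if_neg, if_neg, if_pos rfl] at this
    · simp at this
    · intro h
      have := h 2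
      simp [Finsupp.single_apply] at this
      omega
    · intro h
      have := h 0
      simp [Finsupp.single_apply] at this
      omega
  refine ⟨hmemcl, hnotmem, fun h => hnotmem ?_⟩
  have : f ∈ (↑I : Set R) := h ▸ hmemcl
  exact this
end

section
/- Let G_ω be the edge-weighted graph on vertex set {1,2,3,4} consisting of two disjoint edges {1,2} and {3,4}, both of weight at least 2. Then I(G_ω) ≠ its integral closure; i.e., the edge ideal I(G_ω) = (x_1^{ω_1} x_2^{ω_1}, x_3^{ω_3} x_4^{ω_3}) with ω_1, ω_3 ≥ 2 is not integrally closed. In fact, the monomial x_1^{ω_1−1} x_2^{ω_1−1} x_3^{ω_3−1} x_4^{ω_3−1} lies in the integral closure of I(G_ω) but not in I(G_ω). -/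
open MvPolynomial

/-- For two disjoint weighted edges `{1,2}` and `{3,4}` with weights `ω₁, ω₃ ≥ 2`, the edge
ideal `I = (x₁^{ω₁} x₂^{ω₁}, x₃^{ω₃} x₄^{ω₃})` is not integrally closed: the monomial
`x₁^{ω₁-1} x₂^{ω₁-1} x₃^{ω₃-1} x₄^{ω₃-1}` lies in the integral closure of `I` but not in `I`. -/
theorem weighted_two_disjoint_edges_not_intClosed
    (K : Type*) [Field K] (ω₁ ω₃ : ℕ) (h1 : 2 ≤ ω₁) (h3 : 2 ≤ ω₃)
    (I : Ideal (MvPolynomial (Fin 4) K))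
    (hI : I = Ideal.span {X 0 ^ ω₁ * X 1 ^ ω₁, X 2 ^ ω₃ * X 3 ^ ω₃}) :
    (X 0 ^ (ω₁ - 1) * X 1 ^ (ω₁ - 1) * X 2 ^ (ω₃ - 1) * X 3 ^ (ω₃ - 1) ∈ intClosure I) ∧
    (X 0 ^ (ω₁ - 1) * X 1 ^ (ω₁ - 1) * X 2 ^ (ω₃ - 1) * X 3 ^ (ω₃ - 1) ∉ I) ∧
    ¬ IsIntClosed I := by
  set f : MvPolynomial (Fin 4) K :=
    X 0 ^ (ω₁ - 1) * X 1 ^ (ω₁ - 1) * X 2 ^ (ω₃ - 1) * X 3 ^ (ω₃ - 1) with hf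
  have key : f ^ 2 =
      (X 0 ^ (ω₁ - 2) * X 1 ^ (ω₁ - 2) * X 2 ^ (ω₃ - 2) * X 3 ^ (ω₃ - 2)) *
        ((X 0 ^ ω₁ * X 1 ^ ω₁) * (X 2 ^ ω₃ * X 3 ^ ω₃)) := by
    have e1 : (ω₁ - 1) * 2 = (ω₁ - 2) + ω₁ := by omega
    have e3 : (ω₃ - 1) * 2 = (ω₃ - 2) + ω₃ := by omega
    rw [hf, mul_pow, mul_pow, mul_pow, ← pow_mul, ← pow_mul, ← pow_mul, ← pow_mul,
      e1, e3, pow_add, pow_add, pow_add, pow_add]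
    ring
  have hmem : f ∈ intClosure I := by
    refine ⟨2, by norm_num, fun i => if i = 2 then -(f ^ 2) else 0, ?_, ?_⟩
    · intro i hi
      simp only [Finset.mem_Icc] at hi
      obtain ⟨h1i, h2i⟩ := hi
      interval_cases i
      · simp
      · simp only [if_pos rfl]
        refine neg_mem ?_
        rw [key, hI, pow_two]
        exact Ideal.mul_mem_left _ _
          (Ideal.mul_mem_mul (Ideal.subset_span (by simp)) (Ideal.subset_span (by simp)))
    · have : Finset.Icc 1 2 = ({1, 2} : Finset ℕ) := by decide
      rw [this]
      simp
  have hnotmem : f ∉ I := by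
    intro h
    rw [hI, Ideal.mem_span_pair] at h
    obtain ⟨u, v, huv⟩ := h
    set m : Fin 4 →₀ ℕ := Finsupp.single 0 (ω₁ - 1) + Finsupp.single 1 (ω₁ - 1) +
      Finsupp.single 2 (ω₃ - 1) + Finsupp.single 3 (ω₃ - 1) with hm
    have hfm : f = monomial m 1 := by
      rw [hf, hm, X_pow_eq_monomial, X_pow_eq_monomial, X_pow_eq_monomial, X_pow_eq_monomial]
      simp [monomial_mul]
    have hg1 : (X 0 ^ ω₁ * X 1 ^ ω₁ : MvPolynomial (Fin 4) K) =
        monomial (Finsupp.single 0 ω₁ + Finsupp.single 1 ω₁) 1 := by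
      rw [X_pow_eq_monomial, X_pow_eq_monomial]; simp [monomial_mul]
    have hg3 : (X 2 ^ ω₃ * X 3 ^ ω₃ : MvPolynomial (Fin 4) K) =
        monomial (Finsupp.single 2 ω₃ + Finsupp.single 3 ω₃) 1 := by
      rw [X_pow_eq_monomial, X_pow_eq_monomial]; simp [monomial_mul]
    have hc := congrArg (coeff m) huv
    rw [hfm, hg1, hg3, coeff_add, coeff_mul_monomial', coeff_mul_monomial',
      coeff_monomial, if_pos rfl] at hc
    have hle1 : ¬ (Finsupp.single 0 ω₁ + Finsupp.single (1 : Fin 4) ω₁ ≤ m) := by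
      intro hle
      have := hle 0
      simp [hm, Finsupp.single_apply] at this
      omega
    have hle3 : ¬ (Finsupp.single 2 ω₃ + Finsupp.single (3 : Fin 4) ω₃ ≤ m) := by
      intro hle
      have := hle 2
      simp [hm, Finsupp.single_apply] at this
      omega
    rw [if_neg hle1, if_neg hle3] at hc
    simp at hc
  exact ⟨hmem, hnotmem, fun h => hnotmem (by rw [IsIntClosed] at h; have : f ∈ (↑I : Set _) := h ▸ hmem; exact this)⟩
end

section
/- Let G_ω be the edge-weighted 3-cycle on vertex set {1,2,3} with edges {1,2}, {2,3}, {3,1}, all of weight at least 2. Then I(G_ω) ≠ its integral closure; i.e., the edge ideal I(G_ω) = (x_1^{ω_1} x_2^{ω_1}, x_2^{ω_2} x_3^{ω_2}, x_3^{ω_3} x_1^{ω_3}) with ω_1, ω_2, ω_3 ≥ 2 is not integrally closed. -/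
open MvPolynomial

/-- Key auxiliary lemma: if there is a monomial exponent `d` such that no generator exponent
is below `d` (so `monomial d 1 ∉ I`) but some `p + q ≤ d + d` with `p q` generator exponents
(so `(monomial d 1)^2 ∈ I^2`), then the monomial ideal is not integrally closed. -/
lemma monomial_ideal_not_intClosed_aux {K : Type*} [Field K] (s : Set (Fin 3 →₀ ℕ))
    (d p q : Fin 3 →₀ ℕ)
    (hp : p ∈ s) (hq : q ∈ s) (hle : p + q ≤ d + d)
    (hnot : ∀ e ∈ s, ¬ e ≤ d) :
    ¬ IsIntClosed (Ideal.span ((fun e => monomial e (1:K)) '' s)) := by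
  set I : Ideal (MvPolynomial (Fin 3) K) :=
    Ideal.span ((fun e => monomial e (1:K)) '' s) with hIdef
  intro h
  set f : MvPolynomial (Fin 3) K := monomial d 1 with hf
  have hfI : f ∉ I := by
    intro hmem
    rw [hIdef, mem_ideal_span_monomial_image] at hmem
    have hd : d ∈ f.support := by
      rw [hf, mem_support_iff]
      simp [coeff_monomial]
    obtain ⟨e, he, hed⟩ := hmem d hd
    exact hnot e he hed
  have hf2 : f ^ 2 ∈ I ^ 2 := by
    have hpI : monomial p (1:K) ∈ I := Ideal.subset_span ⟨p, hp, rfl⟩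
    have hqI : monomial q (1:K) ∈ I := Ideal.subset_span ⟨q, hq, rfl⟩
    have key : f ^ 2 = monomial (d + d - (p + q)) (1:K) * monomial p (1:K) *
        monomial q (1:K) := by
      rw [hf, pow_two, monomial_mul, monomial_mul, monomial_mul, one_mul, one_mul]
      congr 1
      rw [add_assoc, tsub_add_cancel_of_le hle]
    rw [key, pow_two]
    exact Ideal.mul_mem_mul (I.mul_mem_left _ hpI) hqI
  have hmem : f ∈ intClosure I := by
    refine ⟨2, two_pos, fun i => if i = 2 then -(f^2) else 0, ?_, ?_⟩
    · intro i hi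
      simp only [Finset.mem_Icc] at hi
      obtain ⟨hi1, hi2⟩ := hi
      interval_cases i
      · simp
      · simpa using (I ^ 2).neg_mem hf2
    · have : Finset.Icc 1 2 = ({1, 2} : Finset ℕ) := by decide
      rw [this]
      simp
  rw [IsIntClosed] at h
  rw [h] at hmem
  exact hfI hmem

/-- For the weighted 3-cycle on `{1,2,3}` with all edge weights `ω₁, ω₂, ω₃ ≥ 2`, the
edge ideal `I = (x₁^{ω₁} x₂^{ω₁}, x₂^{ω₂} x₃^{ω₂}, x₃^{ω₃} x₁^{ω₃})` is not
integrally closed. -/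
theorem weighted_triangle_not_intClosed
    (K : Type*) [Field K] (ω₁ ω₂ ω₃ : ℕ) (h1 : 2 ≤ ω₁) (h2 : 2 ≤ ω₂) (h3 : 2 ≤ ω₃)
    (I : Ideal (MvPolynomial (Fin 3) K))
    (hI : I = Ideal.span {X 0 ^ ω₁ * X 1 ^ ω₁, X 1 ^ ω₂ * X 2 ^ ω₂, X 2 ^ ω₃ * X 0 ^ ω₃}) :
    ¬ IsIntClosed I := by
  set e1 : Fin 3 →₀ ℕ := Finsupp.single 0 ω₁ + Finsupp.single 1 ω₁ with he1
  set e2 : Fin 3 →₀ ℕ := Finsupp.single 1 ω₂ + Finsupp.single 2 ω₂ with he2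
  set e3 : Fin 3 →₀ ℕ := Finsupp.single 2 ω₃ + Finsupp.single 0 ω₃ with he3
  have hset : ({X 0 ^ ω₁ * X 1 ^ ω₁, X 1 ^ ω₂ * X 2 ^ ω₂, X 2 ^ ω₃ * X 0 ^ ω₃} :
      Set (MvPolynomial (Fin 3) K)) =
      (fun e => monomial e (1:K)) '' {e1, e2, e3} := by
    rw [Set.image_insert_eq, Set.image_insert_eq, Set.image_singleton]
    simp only [he1, he2, he3, X_pow_eq_monomial, monomial_mul, one_mul]
  rw [hI, hset]
  -- evaluation facts
  have hv1 : e1 0 = ω₁ ∧ e1 1 = ω₁ ∧ e1 2 = 0 := by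
    refine ⟨?_, ?_, ?_⟩ <;> simp [he1, Finsupp.single_apply]
  have hv2 : e2 0 = 0 ∧ e2 1 = ω₂ ∧ e2 2 = ω₂ := by
    refine ⟨?_, ?_, ?_⟩ <;> simp [he2, Finsupp.single_apply]
  have hv3 : e3 0 = ω₃ ∧ e3 1 = 0 ∧ e3 2 = ω₃ := by
    refine ⟨?_, ?_, ?_⟩ <;> simp [he3, Finsupp.single_apply]
  obtain ⟨h10, h11, h12⟩ := hv1
  obtain ⟨h20, h21, h22⟩ := hv2
  obtain ⟨h30, h31, h32⟩ := hv3
  by_cases hcase : ω₃ < ω₁ ∧ ω₃ < ω₂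
  · -- ω₃ is small: use pair (e2, e3)
    set d : Fin 3 →₀ ℕ := Finsupp.single 0 ((ω₃+1)/2) + Finsupp.single 1 ((ω₂+1)/2) +
      Finsupp.single 2 ((ω₂+ω₃+1)/2) with hd
    have hd0 : d 0 = (ω₃+1)/2 := by simp [hd, Finsupp.single_apply]
    have hd1 : d 1 = (ω₂+1)/2 := by simp [hd, Finsupp.single_apply]
    have hd2 : d 2 = (ω₂+ω₃+1)/2 := by simp [hd, Finsupp.single_apply]
    refine monomial_ideal_not_intClosed_aux _ d e2 e3
      (by simp) (by simp) ?_ ?_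
    · rw [Finsupp.le_def]
      intro i
      fin_cases i <;>
        simp [he2, he3, hd, Finsupp.single_apply, Fin.ext_iff] <;> omega
    · intro e he
      simp only [Set.mem_insert_iff, Set.mem_singleton_iff] at he
      rcases he with rfl | rfl | rfl <;> intro hle <;> rw [Finsupp.le_def] at hle
      · have ha := hle 0
        rw [h10, hd0] at ha
        omega
      · have ha := hle 1
        rw [h21, hd1] at ha
        omega
      · have ha := hle 0
        rw [h30, hd0] at ha
        omega
  · -- min ω₁ ω₂ ≤ ω₃ : use pair (e1, e2)
    set d : Fin 3 →₀ ℕ := Finsupp.single 0 ((ω₁+1)/2) + Finsupp.single 1 ((ω₁+ω₂+1)/2) +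
      Finsupp.single 2 ((ω₂+1)/2) with hd
    have hd0 : d 0 = (ω₁+1)/2 := by simp [hd, Finsupp.single_apply]
    have hd1 : d 1 = (ω₁+ω₂+1)/2 := by simp [hd, Finsupp.single_apply]
    have hd2 : d 2 = (ω₂+1)/2 := by simp [hd, Finsupp.single_apply]
    refine monomial_ideal_not_intClosed_aux _ d e1 e2
      (by simp) (by simp) ?_ ?_
    · rw [Finsupp.le_def]
      intro i
      fin_cases i <;>
        simp [he1, he2, hd, Finsupp.single_apply, Fin.ext_iff] <;> omega
    · intro e he
      simp only [Set.mem_insert_iff, Set.mem_singleton_iff] at he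
      rcases he with rfl | rfl | rfl <;> intro hle <;> rw [Finsupp.le_def] at hle
      · have ha := hle 0
        rw [h10, hd0] at ha
        omega
      · have ha := hle 2
        rw [h22, hd2] at ha
        omega
      · have ha := hle 0
        have hb := hle 2
        rw [h30, hd0] at ha
        rw [h32, hd2] at hb
        omega
end

section
/- Let G_ω be an edge-weighted graph. If G_ω contains, as an induced subgraph, either (i) a path of length 2 whose two edges both have weight at least 2, or (ii) two disjoint edges both of weight at least 2, or (iii) a 3-cycle all of whose edges have weight at least 2, then the edge ideal I(G_ω) is not integrally closed. -/
open MvPolynomial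

/-- `G_ω` contains an induced path of length 2 both of whose edges have weight ≥ 2. -/
def HasBadPath3 {n : ℕ} (G : SimpleGraph (Fin n)) (w : Sym2 (Fin n) → ℕ) : Prop :=
  ∃ a b c : Fin n, a ≠ c ∧ G.Adj a b ∧ G.Adj b c ∧ ¬ G.Adj a c ∧
    2 ≤ w s(a, b) ∧ 2 ≤ w s(b, c)

/-- `G_ω` contains two induced disjoint edges both of weight ≥ 2. -/
def HasBadTwoEdges {n : ℕ} (G : SimpleGraph (Fin n)) (w : Sym2 (Fin n) → ℕ) : Prop :=
  ∃ a b c d : Fin n, a ≠ c ∧ a ≠ d ∧ b ≠ c ∧ b ≠ d ∧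
    G.Adj a b ∧ G.Adj c d ∧ ¬ G.Adj a c ∧ ¬ G.Adj a d ∧ ¬ G.Adj b c ∧ ¬ G.Adj b d ∧
    2 ≤ w s(a, b) ∧ 2 ≤ w s(c, d)

/-- `G_ω` contains a 3-cycle all of whose edges have weight ≥ 2. -/
def HasBadTriangle {n : ℕ} (G : SimpleGraph (Fin n)) (w : Sym2 (Fin n) → ℕ) : Prop :=
  ∃ a b c : Fin n, G.Adj a b ∧ G.Adj b c ∧ G.Adj a c ∧
    2 ≤ w s(a, b) ∧ 2 ≤ w s(b, c) ∧ 2 ≤ w s(a, c)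

/-! If `e₁ = {i, i'}` and `e₂ = {j, j'}` are edges of weights `a, b ≥ 2`, with generators
`m₁ = (xᵢ x_{i'})^a` and `m₂ = (x_j x_{j'})^b`, put `f = xᵢ^(a-1) x_{i'}^a x_j^(b-1) x_{j'}^b`.
Then `f² = xᵢ^(a-2) x_{i'}^a x_j^(b-2) x_{j'}^b · m₁ m₂ ∈ I²`, so `f` is integral over `I`.
But `f` misses one factor `xᵢ` of `m₁` and one factor `x_j` of `m₂`, and when the
subgraph on `{i, i', j, j'}` is one of the three bad configurations, no other generator
divides `f` either, so `f ∉ I`. For a triangle this needs the apex `i' = j'` chosen so that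
the third edge `{i, j}` is not lighter than both of the others. -/

lemma mem_intClosure_of_sq_mem_sq {R : Type*} [CommRing R] {I : Ideal R} {f : R}
    (h : f ^ 2 ∈ I ^ 2) : f ∈ intClosure I := by
  refine ⟨2, two_pos, fun i => if i = 2 then -f ^ 2 else 0, ?_, ?_⟩
  · intro i _
    dsimp only
    split_ifs with hi
    · subst hi; exact neg_mem h
    · exact Ideal.zero_mem _
  · rw [show Finset.Icc 1 2 = ({1, 2} : Finset ℕ) by decide]
    simp

lemma not_isIntClosed_of_sq_mem_sq {R : Type*} [CommRing R] {I : Ideal R} {f : R}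
    (hsq : f ^ 2 ∈ I ^ 2) (hf : f ∉ I) : ¬ IsIntClosed I := fun hI =>
  hf (by rw [← SetLike.mem_coe, ← hI]; exact mem_intClosure_of_sq_mem_sq hsq)

lemma sq_mem_sq_of_pow_mul_pow_mem {R : Type*} [CommSemiring R] {I : Ideal R}
    {x y z t : R} {a b : ℕ} (ha : 2 ≤ a) (hb : 2 ≤ b)
    (hxy : x ^ a * y ^ a ∈ I) (hzt : z ^ b * t ^ b ∈ I) :
    (x ^ (a - 1) * y ^ a * z ^ (b - 1) * t ^ b) ^ 2 ∈ I ^ 2 := by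
  obtain ⟨a, rfl⟩ := Nat.exists_eq_add_of_le' ha
  obtain ⟨b, rfl⟩ := Nat.exists_eq_add_of_le' hb
  have hfactor : (x ^ (a + 2 - 1) * y ^ (a + 2) * z ^ (b + 2 - 1) * t ^ (b + 2)) ^ 2 =
      x ^ a * y ^ (a + 2) * z ^ b * t ^ (b + 2) *
        ((x ^ (a + 2) * y ^ (a + 2)) * (z ^ (b + 2) * t ^ (b + 2))) := by
    rw [show a + 2 - 1 = a + 1 by omega, show b + 2 - 1 = b + 1 by omega]
    ring
  rw [hfactor, pow_two]
  exact Ideal.mul_mem_left _ _ (Ideal.mul_mem_mul hxy hzt)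

section EdgeIdeal

variable {n : ℕ} {G : SimpleGraph (Fin n)} {w : Sym2 (Fin n) → ℕ}

lemma monomial_mem_edgeIdeal_iff (K : Type*) [Field K] (d : Fin n →₀ ℕ) :
    monomial d (1 : K) ∈ edgeIdeal K G w ↔
      ∃ i j, G.Adj i j ∧ w s(i, j) ≤ d i ∧ w s(i, j) ≤ d j := by
  have hgen : {m | ∃ i j, G.Adj i j ∧ m = (X i ^ w s(i, j) * X j ^ w s(i, j) :
      MvPolynomial (Fin n) K)} = (fun e => monomial e (1 : K)) '' {e | ∃ i j, G.Adj i j ∧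
        e = Finsupp.single i (w s(i, j)) + Finsupp.single j (w s(i, j))} := by
    ext m
    constructor
    · rintro ⟨i, j, h, rfl⟩
      exact ⟨_, ⟨i, j, h, rfl⟩, by simp [X_pow_eq_monomial, monomial_mul]⟩
    · rintro ⟨e, ⟨i, j, h, rfl⟩, rfl⟩
      exact ⟨i, j, h, by simp [X_pow_eq_monomial, monomial_mul]⟩
  rw [edgeIdeal, hgen, mem_ideal_span_monomial_image]
  simp only [mem_support_iff, coeff_monomial, ne_eq, ite_eq_right_iff, one_ne_zero, imp_false,
    Decidable.not_not, Set.mem_ofPred_eq, existsAndEq, and_true, forall_eq']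
  refine exists₂_congr fun i j => and_congr_right fun hij => ?_
  constructor
  · intro h
    exact ⟨by simpa [hij.ne.symm] using h i, by simpa [hij.ne] using h j⟩
  · rintro ⟨hi, hj⟩ x
    by_cases hxi : x = i <;> by_cases hxj : x = j <;> simp_all [hij.ne, Ne.symm]

lemma lt_weight_or_lt_weight_of_adj {d : Fin n →₀ ℕ} (hw : ∀ e ∈ G.edgeSet, 1 ≤ w e)
    {i i' j j' l : Fin n} (hdi : d i < w s(i, i')) (hdj : d j < w s(j, j'))
    (hsupp : ∀ x, d x ≠ 0 → x = i ∨ x = i' ∨ x = j ∨ x = j')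
    (hij : G.Adj i j → min (w s(i, i')) (w s(j, j')) ≤ w s(i, j))
    (hij' : G.Adj i j' → w s(i, i') ≤ w s(i, j')) (hil : G.Adj i l) :
    d i < w s(i, l) ∨ d l < w s(i, l) := by
  by_contra! h
  have hpos := hw _ (G.mem_edgeSet.mpr hil)
  rcases hsupp l (by omega) with rfl | rfl | rfl | rfl
  · exact hil.ne rfl
  · omega
  · have := hij hil; omega
  · have := hij' hil; omega

lemma monomial_not_mem_edgeIdeal (K : Type*) [Field K] {d : Fin n →₀ ℕ}
    (hw : ∀ e ∈ G.edgeSet, 1 ≤ w e) {i i' j j' : Fin n}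
    (hdi : d i < w s(i, i')) (hdj : d j < w s(j, j'))
    (hsupp : ∀ x, d x ≠ 0 → x = i ∨ x = i' ∨ x = j ∨ x = j')
    (hij : G.Adj i j → min (w s(i, i')) (w s(j, j')) ≤ w s(i, j))
    (hij' : G.Adj i j' → w s(i, i') ≤ w s(i, j'))
    (hji' : G.Adj j i' → w s(j, j') ≤ w s(j, i')) (hi'j' : ¬ G.Adj i' j') :
    monomial d (1 : K) ∉ edgeIdeal K G w := by
  rw [monomial_mem_edgeIdeal_iff]
  rintro ⟨k, l, hkl, hk, hl⟩
  have hends : ∀ {k l}, G.Adj k l → k = i ∨ k = j → d k < w s(k, l) ∨ d l < w s(k, l) := by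
    rintro k l hkl (rfl | rfl)
    · exact lt_weight_or_lt_weight_of_adj hw hdi hdj hsupp hij hij' hkl
    · refine lt_weight_or_lt_weight_of_adj hw hdj hdi (fun x hx => ?_) (fun h => ?_) hji' hkl
      · have := hsupp x hx; tauto
      · rw [min_comm, Sym2.eq_swap (a := k) (b := i)]; exact hij h.symm
  by_cases hk' : k = i ∨ k = j
  · have := hends hkl hk'; omega
  by_cases hl' : l = i ∨ l = j
  · have := hends hkl.symm hl'; rw [Sym2.eq_swap] at this; omega
  have hpos := hw _ (G.mem_edgeSet.mpr hkl)
  have hk'' : k = i' ∨ k = j' := by have := hsupp k (by omega); tauto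
  have hl'' : l = i' ∨ l = j' := by have := hsupp l (by omega); tauto
  rcases hk'' with rfl | rfl <;> rcases hl'' with rfl | rfl
  · exact hkl.ne rfl
  · exact hi'j' hkl
  · exact hi'j' hkl.symm
  · exact hkl.ne rfl

theorem not_isIntClosed_edgeIdeal_of_adj_of_adj (K : Type*) [Field K]
    (hw : ∀ e ∈ G.edgeSet, 1 ≤ w e) {i i' j j' : Fin n} (hii' : G.Adj i i') (hjj' : G.Adj j j')
    (ha : 2 ≤ w s(i, i')) (hb : 2 ≤ w s(j, j')) (hne_ij : i ≠ j) (hne_ij' : i ≠ j')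
    (hne_ji' : j ≠ i')
    (hij : G.Adj i j → min (w s(i, i')) (w s(j, j')) ≤ w s(i, j))
    (hij' : G.Adj i j' → w s(i, i') ≤ w s(i, j'))
    (hji' : G.Adj j i' → w s(j, j') ≤ w s(j, i')) (hi'j' : ¬ G.Adj i' j') :
    ¬ IsIntClosed (edgeIdeal K G w) := by
  set a := w s(i, i')
  set b := w s(j, j')
  set d : Fin n →₀ ℕ := Finsupp.single i (a - 1) + Finsupp.single i' a +
    Finsupp.single j (b - 1) + Finsupp.single j' b
  have hf : (X i ^ (a - 1) * X i' ^ a * X j ^ (b - 1) * X j' ^ b : MvPolynomial (Fin n) K) =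
      monomial d 1 := by
    simp [d, X_pow_eq_monomial, monomial_mul]
  refine not_isIntClosed_of_sq_mem_sq (sq_mem_sq_of_pow_mul_pow_mem ha hb
    (Ideal.subset_span ⟨i, i', hii', rfl⟩) (Ideal.subset_span ⟨j, j', hjj', rfl⟩)) ?_
  rw [hf]
  refine monomial_not_mem_edgeIdeal K hw (i' := i') (j' := j') ?_ ?_ ?_ hij hij' hji' hi'j'
  · have : d i = a - 1 := by simp [d, hii'.ne, hne_ij, hne_ij']
    omega
  · have : d j = b - 1 := by simp [d, hjj'.ne, hne_ij.symm, hne_ji']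
    omega
  · intro x hx
    by_contra! h
    simp [d, h.1.symm, h.2.1.symm, h.2.2.1.symm, h.2.2.2.symm] at hx

theorem not_isIntClosed_edgeIdeal_of_cherry (K : Type*) [Field K]
    (hw : ∀ e ∈ G.edgeSet, 1 ≤ w e) {a b c : Fin n} (hab : G.Adj a b) (hbc : G.Adj b c)
    (hac : a ≠ c) (h₁ : 2 ≤ w s(a, b)) (h₂ : 2 ≤ w s(b, c))
    (hadj : G.Adj a c → min (w s(a, b)) (w s(b, c)) ≤ w s(a, c)) :
    ¬ IsIntClosed (edgeIdeal K G w) := by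
  rw [Sym2.eq_swap (a := b)] at h₂ hadj
  exact not_isIntClosed_edgeIdeal_of_adj_of_adj K hw hab hbc.symm h₁ h₂ hac hab.ne hbc.ne.symm
    hadj (fun _ => le_rfl) (fun _ => le_rfl) G.irrefl

theorem not_isIntClosed_edgeIdeal_of_triangle (K : Type*) [Field K]
    (hw : ∀ e ∈ G.edgeSet, 1 ≤ w e) {a b c : Fin n} (hab : G.Adj a b) (hbc : G.Adj b c)
    (hac : G.Adj a c) (h₁ : 2 ≤ w s(a, b)) (h₂ : 2 ≤ w s(b, c)) (h₃ : 2 ≤ w s(a, c)) :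
    ¬ IsIntClosed (edgeIdeal K G w) := by
  by_cases hmin : min (w s(a, b)) (w s(b, c)) ≤ w s(a, c)
  · exact not_isIntClosed_edgeIdeal_of_cherry K hw hab hbc hac.ne h₁ h₂ fun _ => hmin
  · rw [Sym2.eq_swap (a := b)] at h₂ hmin
    exact not_isIntClosed_edgeIdeal_of_cherry K hw hac hbc.symm hab.ne h₃ h₂ fun _ => by omega

end EdgeIdeal

/-- If `G_ω` contains, as an induced subgraph, a path of length 2 with both edges of
weight ≥ 2, or two disjoint edges of weight ≥ 2, or a 3-cycle with all edges of
weight ≥ 2, then `I(G_ω)` is not integrally closed. -/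
theorem edgeIdeal_not_intClosed_of_bad_induced_subgraph
    (K : Type*) [Field K] {n : ℕ} (G : SimpleGraph (Fin n))
    (w : Sym2 (Fin n) → ℕ) (hw : ∀ e ∈ G.edgeSet, 1 ≤ w e)
    (hbad : HasBadPath3 G w ∨ HasBadTwoEdges G w ∨ HasBadTriangle G w) :
    ¬ IsIntClosed (edgeIdeal K G w) := by
  rcases hbad with ⟨a, b, c, hac, hab, hbc, hnac, h₁, h₂⟩ |
    ⟨a, b, c, d, hac, had, hbc, hbd, hab, hcd, nac, nad, nbc, nbd, h₁, h₂⟩ |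
    ⟨a, b, c, hab, hbc, hac, h₁, h₂, h₃⟩
  · exact not_isIntClosed_edgeIdeal_of_cherry K hw hab hbc hac h₁ h₂ fun h => absurd h hnac
  · exact not_isIntClosed_edgeIdeal_of_adj_of_adj K hw hab hcd h₁ h₂ hac had hbc.symm
      (absurd · nac) (absurd · nad) (absurd ·.symm nbc) nbd
  · exact not_isIntClosed_edgeIdeal_of_triangle K hw hab hbc hac h₁ h₂ h₃
end

section
/- Let n ≥ 3 and let a = (a_1,…,a_n) be a vector of nonnegative integers such that a_j ≥ a_{j−1} − a_{j−2} + ⋯ + (−1)^{i−1} a_{j−i} + ⋯ + (−1)^{j−2} a_1 for each j = 2, …, n−1, and a_n ≤ a_{n−1} − a_{n−2} + ⋯ + (−1)^{i−1} a_{n−i} + ⋯ + (−1)^{n−2} a_1. Suppose y = (y_1,…,y_n) is a vector of nonnegative real numbers satisfying y_1 ≤ a_1 and y_{j−1} + y_j ≤ a_j for each j = 2, …, n. Let h = ⌈y_1 + ⋯ + y_n⌉. Then the monomial x^a = x_1^{a_1} ⋯ x_n^{a_n} is divisible by a product of h monomials from the set {x_1 x_2, x_2 x_3, …, x_{n−1}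 x_n}. -/
open MvPolynomial

private def Bf (a : ℕ → ℕ) (j : ℕ) : ℤ :=
  ∑ i ∈ Finset.Icc 1 (j-1), (-1:ℤ)^(i-1) * (a (j - i) : ℤ)

private lemma Bf_one (a : ℕ → ℕ) : Bf a 1 = 0 := by simp [Bf]

private lemma Bf_rec (a : ℕ → ℕ) (j : ℕ) (hj : 1 ≤ j) :
    Bf a (j+1) = (a j : ℤ) - Bf a j := by
  unfold Bf
  have h1 : Finset.Icc 1 (j+1-1) = insert 1 (Finset.Icc 2 j) := by
    ext k; simp only [Finset.mem_Icc, Finset.mem_insert]; omega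
  have h2 : Finset.Icc 2 j = Finset.map (addRightEmbedding 1) (Finset.Icc 1 (j-1)) := by
    rw [Finset.map_add_right_Icc]
    congr 1; omega
  rw [h1, Finset.sum_insert (by simp), h2, Finset.sum_map]
  simp only [addRightEmbedding_apply]
  have hterm : ∀ k ∈ Finset.Icc 1 (j-1), (-1:ℤ)^(k+1-1) * (a (j+1-(k+1)) : ℤ)
      = -((-1:ℤ)^(k-1) * (a (j-k) : ℤ)) := by
    intro k hk
    simp only [Finset.mem_Icc] at hk
    have hk1 : k + 1 - 1 = (k-1) + 1 := by omega
    have hk2 : j + 1 - (k+1) = j - k := by omega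
    rw [hk1, hk2, pow_succ]
    ring
  rw [Finset.sum_congr rfl hterm, Finset.sum_neg_distrib]
  have h3 : j + 1 - 1 = j := by omega
  rw [h3]
  ring

private def cstarF (a : ℕ → ℕ) (N : ℕ) (j : ℕ) : ℕ :=
  if j = N + 2 then a (N+3) else if 1 ≤ j ∧ j ≤ N+1 then (Bf a (j+1)).toNat else 0

private lemma prod_dvd_aux (K : Type*) [CommSemiring K] (M : ℕ) (e b : ℕ → ℕ)
    (h : ∀ j ∈ Finset.Icc 1 M, e j ≤ b j) :
    (∏ j ∈ Finset.Icc 1 M, (X j : MvPolynomial ℕ K)^(e j)) ∣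
      ∏ j ∈ Finset.Icc 1 M, (X j : MvPolynomial ℕ K)^(b j) := by
  refine ⟨∏ j ∈ Finset.Icc 1 M, (X j : MvPolynomial ℕ K)^(b j - e j), ?_⟩
  rw [← Finset.prod_mul_distrib]
  apply Finset.prod_congr rfl
  intro j hj
  rw [← pow_add]
  have := h j hj
  congr 1
  omega

private lemma prod_shift_aux (K : Type*) [CommSemiring K] (M : ℕ) (c : ℕ → ℕ)
    (hc0 : c 0 = 0) (hcM : c (M+1) = 0) :
    ∏ i ∈ Finset.Icc 1 M, ((X i : MvPolynomial ℕ K) * X (i+1))^(c i)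
      = ∏ j ∈ Finset.Icc 1 (M+1), (X j : MvPolynomial ℕ K)^(c (j-1) + c j) := by
  simp only [mul_pow, pow_add]
  rw [Finset.prod_mul_distrib, Finset.prod_mul_distrib, mul_comm]
  congr 1
  · have h1 : Finset.Icc 1 (M+1) = insert 1 (Finset.Icc 2 (M+1)) := by
      ext k; simp only [Finset.mem_Icc, Finset.mem_insert]; omega
    rw [h1, Finset.prod_insert (by simp)]
    have h2 : Finset.Icc 2 (M+1) = Finset.map (addRightEmbedding 1) (Finset.Icc 1 M) := by
      rw [Finset.map_add_right_Icc]
    rw [h2, Finset.prod_map]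
    simp [hc0]
  · rw [Finset.prod_Icc_succ_top (by omega), hcM, pow_zero, mul_one]

private lemma tele_aux (f : ℕ → ℕ) (hf : Monotone f) (M : ℕ) :
    ∑ i ∈ Finset.Icc 1 M, (f i - f (i-1)) = f M - f 0 := by
  induction M with
  | zero => simp
  | succ M ih =>
    rw [Finset.sum_Icc_succ_top (by omega), ih]
    have h1 := hf (Nat.zero_le M)
    have h2 := hf (Nat.le_succ M)
    simp only [Nat.succ_eq_add_one, Nat.add_sub_cancel] at *
    omega

/-- Lemma 4.4(1): let `n ≥ 3` and `a = (a_1,…,a_n)` nonnegative integers with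
`a_j ≥ a_{j-1} - a_{j-2} + ⋯ + (-1)^{j-2} a_1` for `j = 2,…,n-1` and
`a_n ≤ a_{n-1} - a_{n-2} + ⋯ + (-1)^{n-2} a_1`. If `y = (y_1,…,y_n)` are nonnegative
reals with `y_1 ≤ a_1` and `y_{j-1} + y_j ≤ a_j` for `j = 2,…,n`, and
`h = ⌈y_1 + ⋯ + y_n⌉`, then `x^a` is divisible by a product of `h` monomials from
`{x_1 x_2, …, x_{n-1} x_n}`. -/
theorem divisible_of_alternating_conditions_full
    (K : Type*) [Field K] (n : ℕ) (hn : 3 ≤ n)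
    (a : ℕ → ℕ) (y : ℕ → ℝ)
    (ha1 : ∀ j ∈ Finset.Icc 2 (n - 1),
      (∑ i ∈ Finset.Icc 1 (j - 1), (-1 : ℤ) ^ (i - 1) * (a (j - i) : ℤ)) ≤ (a j : ℤ))
    (ha2 : (a n : ℤ) ≤ ∑ i ∈ Finset.Icc 1 (n - 1), (-1 : ℤ) ^ (i - 1) * (a (n - i) : ℤ))
    (hy0 : ∀ i ∈ Finset.Icc 1 n, 0 ≤ y i)
    (hy1 : y 1 ≤ (a 1 : ℝ))
    (hy2 : ∀ j ∈ Finset.Icc 2 n, y (j - 1) + y j ≤ (a j : ℝ)) :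
    ∃ c : ℕ → ℕ,
      (∑ i ∈ Finset.Icc 1 (n - 1), c i = ⌈∑ i ∈ Finset.Icc 1 n, y i⌉₊) ∧
      (∏ i ∈ Finset.Icc 1 (n - 1), ((X i * X (i + 1) : MvPolynomial ℕ K) ^ c i)) ∣
        ∏ i ∈ Finset.Icc 1 n, (X i : MvPolynomial ℕ K) ^ a i := by
  obtain ⟨N, rfl⟩ : ∃ N, n = N + 3 := ⟨n - 3, by omega⟩
  clear hn
  have ha1' : ∀ j, 2 ≤ j → j ≤ N + 2 → Bf a j ≤ (a j : ℤ) := by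
    intro j h1 h2
    have hj : j ∈ Finset.Icc 2 (N + 3 - 1) := by simp only [Finset.mem_Icc]; omega
    exact ha1 j hj
  have ha2' : (a (N+3) : ℤ) ≤ Bf a (N+3) := ha2
  have hB2 : Bf a 2 = (a 1 : ℤ) := by
    have := Bf_rec a 1 le_rfl
    rw [Bf_one] at this
    simpa using this
  -- nonnegativity of Bf on [2, N+2]
  have hBnn : ∀ j, 2 ≤ j → j ≤ N + 2 → 0 ≤ Bf a j := by
    intro j hj
    induction j, hj using Nat.le_induction with
    | base => intro _; rw [hB2]; positivity
    | succ m hm ih =>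
      intro hm2
      rw [Bf_rec a m (by omega)]
      have h1 := ha1' m (by omega) (by omega)
      omega
  -- key upper bound by induction
  have key : ∀ m, 1 ≤ m → m ≤ N + 2 →
      ((∑ i ∈ Finset.Icc 1 m, y i) ≤ ((∑ j ∈ Finset.Icc 2 (m+1), Bf a j : ℤ) : ℝ) ∧
       (∑ i ∈ Finset.Icc 1 (m-1), y i) ≤ ((∑ j ∈ Finset.Icc 2 m, Bf a j : ℤ) : ℝ)) := by
    intro m hm
    induction m, hm using Nat.le_induction with
    | base =>
      intro _
      constructor
      · simp only [Finset.Icc_self, Finset.sum_singleton, hB2]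
        exact_mod_cast hy1
      · simp
    | succ m hm ih =>
      intro hm2
      obtain ⟨ih1, ih2⟩ := ih (by omega)
      refine ⟨?_, by simpa using ih1⟩
      have hmm : m - 1 + 1 = m := by omega
      have e1 : ∑ i ∈ Finset.Icc 1 (m+1), y i
          = (∑ i ∈ Finset.Icc 1 (m-1), y i) + y m + y (m+1) := by
        rw [Finset.sum_Icc_succ_top (by omega) y]
        congr 1
        have := Finset.sum_Icc_succ_top (a := 1) (b := m - 1) (by omega) y
        rw [hmm] at this
        exact this
      have e2 : (∑ j ∈ Finset.Icc 2 (m+1+1), Bf a j)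
          = (∑ j ∈ Finset.Icc 2 m, Bf a j) + Bf a (m+1) + Bf a (m+2) := by
        rw [Finset.sum_Icc_succ_top (by omega), Finset.sum_Icc_succ_top (by omega)]
      have e3 : Bf a (m+2) = (a (m+1) : ℤ) - Bf a (m+1) := Bf_rec a (m+1) (by omega)
      have e4 : y m + y (m+1) ≤ (a (m+1) : ℝ) := by
        have := hy2 (m+1) (by simp only [Finset.mem_Icc]; omega)
        simpa using this
      have e23 : (∑ j ∈ Finset.Icc 2 (m+1+1), Bf a j)
          = (∑ j ∈ Finset.Icc 2 m, Bf a j) + (a (m+1) : ℤ) := by rw [e2, e3]; ring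
      rw [e1, e23]
      push_cast at ih2 ⊢
      linarith
  -- total upper bound
  have hyup : (∑ i ∈ Finset.Icc 1 (N+3), y i)
      ≤ ((∑ j ∈ Finset.Icc 2 (N+2), Bf a j : ℤ) : ℝ) + (a (N+3) : ℝ) := by
    have k2 := (key (N+2) (by omega) le_rfl).2
    have k2' : ∑ i ∈ Finset.Icc 1 (N+1), y i
        ≤ ((∑ j ∈ Finset.Icc 2 (N+2), Bf a j : ℤ) : ℝ) := by simpa using k2
    have e1 : ∑ i ∈ Finset.Icc 1 (N+3), y i
        = (∑ i ∈ Finset.Icc 1 (N+1), y i) + y (N+2) + y (N+3) := by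
      rw [Finset.sum_Icc_succ_top (by omega) y, Finset.sum_Icc_succ_top (by omega) y]
    have e4 : y (N+2) + y (N+3) ≤ (a (N+3) : ℝ) := by
      have := hy2 (N+3) (by simp only [Finset.mem_Icc]; omega)
      simpa using this
    rw [e1]
    linarith
  -- cstar facts
  have hcs_mid : ∀ j, 1 ≤ j → j ≤ N + 1 → cstarF a N j = (Bf a (j+1)).toNat := by
    intro j h1 h2
    simp only [cstarF]
    rw [if_neg (by omega), if_pos ⟨h1, h2⟩]
  have hcs_top : cstarF a N (N+2) = a (N+3) := by simp [cstarF]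
  have hcs_zero : ∀ j, (j = 0 ∨ N + 3 ≤ j) → cstarF a N j = 0 := by
    intro j hj
    simp only [cstarF]
    rw [if_neg (by omega), if_neg (by omega)]
  -- pairwise bound for cstar
  have hcspair : ∀ j, 1 ≤ j → j ≤ N+3 → cstarF a N (j-1) + cstarF a N j ≤ a j := by
    intro j h1 h2
    by_cases hj1 : j = 1
    · subst hj1
      rw [hcs_zero 0 (Or.inl rfl), hcs_mid 1 le_rfl (by omega), hB2]
      simp
    by_cases hj2 : j ≤ N + 1
    · rw [hcs_mid (j-1) (by omega) (by omega), hcs_mid j (by omega) hj2]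
      rw [show j - 1 + 1 = j by omega]
      have r := Bf_rec a j (by omega)
      have n1 := hBnn j (by omega) (by omega)
      have n2 := hBnn (j+1) (by omega) (by omega)
      omega
    by_cases hj3 : j = N + 2
    · subst hj3
      rw [show N + 2 - 1 = N + 1 from rfl, hcs_mid (N+1) (by omega) le_rfl, hcs_top,
        show N + 1 + 1 = N + 2 by omega]
      have r : Bf a (N+3) = (a (N+2) : ℤ) - Bf a (N+2) := by
        have := Bf_rec a (N+2) (by omega)
        rwa [show N + 2 + 1 = N + 3 by omega] at this
      have n1 := hBnn (N+2) (by omega) le_rfl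
      omega
    · have hj4 : j = N + 3 := by omega
      subst hj4
      rw [show N + 3 - 1 = N + 2 from rfl, hcs_top, hcs_zero (N+3) (Or.inr le_rfl)]
      omega
  set h' := ⌈∑ i ∈ Finset.Icc 1 (N+3), y i⌉₊ with hh'
  set P : ℕ → ℕ := fun i => ∑ k ∈ Finset.Icc 1 i, cstarF a N k with hP
  have Pmono : Monotone P := by
    intro i j hij
    exact Finset.sum_le_sum_of_subset (Finset.Icc_subset_Icc_right hij)
  have hPz : ((P (N+2) : ℕ) : ℤ) = (∑ j ∈ Finset.Icc 2 (N+2), Bf a j) + (a (N+3) : ℤ) := by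
    simp only [hP]
    rw [Finset.sum_Icc_succ_top (by omega), hcs_top]
    push_cast
    congr 1
    have e5 : ∀ k ∈ Finset.Icc 1 (N+1), ((cstarF a N k : ℕ) : ℤ) = Bf a (k+1) := by
      intro k hk
      simp only [Finset.mem_Icc] at hk
      rw [hcs_mid k hk.1 hk.2, Int.toNat_of_nonneg (hBnn (k+1) (by omega) (by omega))]
    rw [Finset.sum_congr rfl e5]
    have h2 : Finset.Icc 2 (N+2) = Finset.map (addRightEmbedding 1) (Finset.Icc 1 (N+1)) := by
      rw [Finset.map_add_right_Icc]
    rw [h2, Finset.sum_map]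
    simp [addRightEmbedding_apply]
  have hlast : h' ≤ P (N+2) := by
    rw [hh', Nat.ceil_le]
    calc ∑ i ∈ Finset.Icc 1 (N+3), y i
        ≤ ((∑ j ∈ Finset.Icc 2 (N+2), Bf a j : ℤ) : ℝ) + (a (N+3) : ℝ) := hyup
      _ = (((∑ j ∈ Finset.Icc 2 (N+2), Bf a j) + (a (N+3):ℤ) : ℤ) : ℝ) := by push_cast; ring
      _ = ((P (N+2) : ℤ) : ℝ) := by rw [hPz]
      _ = (P (N+2) : ℝ) := by push_cast; ring
  set c : ℕ → ℕ := fun i => min (P i) h' - min (P (i-1)) h' with hc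
  have hc0 : c 0 = 0 := by simp [hc]
  have hcle : ∀ i, c i ≤ cstarF a N i := by
    intro i
    rcases Nat.eq_zero_or_pos i with h0 | h0
    · subst h0; rw [hc0]; exact Nat.zero_le _
    · have hPi : P i = P (i-1) + cstarF a N i := by
        have := Finset.sum_Icc_succ_top (a := 1) (b := i - 1) (by omega) (cstarF a N)
        rw [show i - 1 + 1 = i by omega] at this
        exact this
      simp only [hc]
      omega
  have hcN3 : c (N+3) = 0 := by
    have hPi : P (N+3) = P (N+2) := by
      simp only [hP]
      rw [Finset.sum_Icc_succ_top (by omega), hcs_zero (N+3) (Or.inr le_rfl), add_zero]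
    simp only [hc, show N + 3 - 1 = N + 2 from rfl, hPi, Nat.sub_self]
  have hcsum : ∑ i ∈ Finset.Icc 1 (N+2), c i = h' := by
    have ht := tele_aux (fun i => min (P i) h') (fun i j hij => min_le_min (Pmono hij) le_rfl) (N+2)
    simp only [hc]
    rw [ht]
    have hP0 : P 0 = 0 := by simp [hP]
    rw [hP0, min_eq_right hlast]
    simp
  have hbound : ∀ j ∈ Finset.Icc 1 (N+3), c (j-1) + c j ≤ a j := by
    intro j hj
    simp only [Finset.mem_Icc] at hj
    have h1 := hcle (j-1)
    have h2 := hcle j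
    have h3 := hcspair j hj.1 hj.2
    omega
  refine ⟨c, hcsum, ?_⟩
  rw [show N + 3 - 1 = N + 2 from rfl]
  rw [prod_shift_aux K (N+2) c hc0 hcN3]
  exact prod_dvd_aux K (N+3) _ a hbound
end

section
/- Let n = 2r be even and let a = (a_1,…,a_n) be a vector of nonnegative integers with a_{2i−1} ≥ a_{2i} for each i = 1, …, r. Suppose y = (y_1,…,y_n) is a vector of nonnegative real numbers satisfying y_1 ≤ a_1 and y_{j−1} + y_j ≤ a_j for each j = 2, …, n. Let h = ⌈y_1 + ⋯ + y_n⌉. Then the monomial x^a = x_1^{a_1} ⋯ x_n^{a_n} is divisible by a product of h monomials from the set {x_1 x_2, x_2 x_3, …, x_{n−1} x_n}. -/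
open MvPolynomial

@[to_additive]
lemma pair_prod_icc {M : Type*} [CommMonoid M] (f : ℕ → M) (r : ℕ) :
    ∏ j ∈ Finset.Icc 1 (2 * r), f j
      = ∏ i ∈ Finset.Icc 1 r, (f (2 * i - 1) * f (2 * i)) := by
  induction r with
  | zero => simp
  | succ r ih =>
      have h1 : 2 * (r + 1) = (2 * r + 1) + 1 := by omega
      rw [h1, Finset.prod_Icc_succ_top (by omega), Finset.prod_Icc_succ_top (by omega), ih,
        Finset.prod_Icc_succ_top (show (1:ℕ) ≤ r + 1 by omega)]
      have h2 : 2 * (r + 1) - 1 = 2 * r + 1 := by omega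
      have h3 : 2 * (r + 1) = 2 * r + 1 + 1 := by omega
      rw [h2, h3, mul_assoc]

lemma greedy_sum (m : ℕ → ℕ) (h : ℕ) (i : ℕ) :
    ∑ k ∈ Finset.Icc 1 i, min (m k) (h - ∑ l ∈ Finset.Icc 1 (k - 1), m l)
      = min h (∑ k ∈ Finset.Icc 1 i, m k) := by
  induction i with
  | zero => simp
  | succ i ih =>
      rw [Finset.sum_Icc_succ_top (by omega), Finset.sum_Icc_succ_top (by omega), ih]
      have h4 : i + 1 - 1 = i := by omega
      rw [h4]
      omega

/-- Lemma 4.4(2): let `n = 2r` and `a = (a_1,…,a_n)` nonnegative integers with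
`a_{2i-1} ≥ a_{2i}` for `i = 1,…,r`. If `y = (y_1,…,y_n)` are nonnegative reals with
`y_1 ≤ a_1` and `y_{j-1} + y_j ≤ a_j` for `j = 2,…,n`, and `h = ⌈y_1 + ⋯ + y_n⌉`,
then `x^a` is divisible by a product of `h` monomials from
`{x_1 x_2, …, x_{n-1} x_n}`. -/
theorem divisible_of_even_pair_conditions_full
    (K : Type*) [Field K] (n r : ℕ) (hn : n = 2 * r)
    (a : ℕ → ℕ) (y : ℕ → ℝ)
    (ha : ∀ i ∈ Finset.Icc 1 r, a (2 * i) ≤ a (2 * i - 1))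
    (hy0 : ∀ i ∈ Finset.Icc 1 n, 0 ≤ y i)
    (hy1 : y 1 ≤ (a 1 : ℝ))
    (hy2 : ∀ j ∈ Finset.Icc 2 n, y (j - 1) + y j ≤ (a j : ℝ)) :
    ∃ c : ℕ → ℕ,
      (∑ i ∈ Finset.Icc 1 (n - 1), c i = ⌈∑ i ∈ Finset.Icc 1 n, y i⌉₊) ∧
      (∏ i ∈ Finset.Icc 1 (n - 1), ((X i * X (i + 1) : MvPolynomial ℕ K) ^ c i)) ∣
        ∏ i ∈ Finset.Icc 1 n, (X i : MvPolynomial ℕ K) ^ a i := by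
  rcases Nat.eq_zero_or_pos r with hr | hr
  · subst hr
    refine ⟨fun _ => 0, ?_, ?_⟩ <;> simp [hn]
  -- set up
  set m : ℕ → ℕ := fun i => a (2 * i) with hm
  set S : ℕ := ∑ k ∈ Finset.Icc 1 r, m k with hS
  -- sum bound
  have hsum : ∑ i ∈ Finset.Icc 1 n, y i ≤ (S : ℝ) := by
    rw [hn, pair_sum_icc]
    have : (S : ℝ) = ∑ k ∈ Finset.Icc 1 r, (m k : ℝ) := by push_cast [hS]; ring
    rw [this]
    refine Finset.sum_le_sum ?_
    intro i hi
    rw [Finset.mem_Icc] at hi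
    have := hy2 (2 * i) (by rw [Finset.mem_Icc]; omega)
    exact this
  set h : ℕ := ⌈∑ i ∈ Finset.Icc 1 n, y i⌉₊ with hh
  have hhS : h ≤ S := Nat.ceil_le.mpr hsum
  -- greedy choice
  set b : ℕ → ℕ := fun k => min (m k) (h - ∑ l ∈ Finset.Icc 1 (k - 1), m l) with hb
  have hbsum : ∑ k ∈ Finset.Icc 1 r, b k = h := by
    rw [hb, greedy_sum, ← hS]; omega
  have hbm : ∀ k, b k ≤ m k := fun k => min_le_left _ _
  -- the c
  refine ⟨fun j => if j % 2 = 1 then b ((j + 1) / 2) else 0, ?_, ?_⟩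
  · -- sum of c
    have hn1 : n - 1 + 1 = n := by omega
    have hsum2 : ∑ j ∈ Finset.Icc 1 n, (if j % 2 = 1 then b ((j + 1) / 2) else 0)
        = ∑ j ∈ Finset.Icc 1 (n - 1), (if j % 2 = 1 then b ((j + 1) / 2) else 0)
          + (if n % 2 = 1 then b ((n + 1) / 2) else 0) := by
      rw [← hn1, Finset.sum_Icc_succ_top (by omega), hn1]
    have hnpar : n % 2 = 0 := by omega
    rw [hnpar] at hsum2
    norm_num at hsum2
    have key : ∑ j ∈ Finset.Icc 1 n, (if j % 2 = 1 then b ((j + 1) / 2) else 0) = h := by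
      rw [hn, pair_sum_icc]
      rw [← hbsum]
      refine Finset.sum_congr rfl ?_
      intro i hi
      rw [Finset.mem_Icc] at hi
      have e1 : (2 * i - 1) % 2 = 1 := by omega
      have e2 : (2 * i - 1 + 1) / 2 = i := by omega
      have e3 : (2 * i) % 2 = 0 := by omega
      rw [e1, e2, e3]
      simp
    have hbeta : ∑ i ∈ Finset.Icc 1 (n - 1),
        (fun j => if j % 2 = 1 then b ((j + 1) / 2) else 0) i
        = ∑ j ∈ Finset.Icc 1 (n - 1), (if j % 2 = 1 then b ((j + 1) / 2) else 0) := rfl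
    rw [hbeta]
    omega
  · -- divisibility
    have hext : (∏ j ∈ Finset.Icc 1 (n - 1),
          ((X j * X (j + 1) : MvPolynomial ℕ K) ^ (if j % 2 = 1 then b ((j + 1) / 2) else 0)))
        = ∏ j ∈ Finset.Icc 1 n,
          ((X j * X (j + 1) : MvPolynomial ℕ K) ^ (if j % 2 = 1 then b ((j + 1) / 2) else 0)) := by
      have hn1 : n - 1 + 1 = n := by omega
      rw [← hn1, Finset.prod_Icc_succ_top (by omega), hn1]
      have hnpar : n % 2 = 0 := by omega
      rw [hnpar]
      simp
    rw [hext, hn, pair_prod_icc, pair_prod_icc]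
    refine Finset.prod_dvd_prod_of_dvd _ _ ?_
    intro i hi
    rw [Finset.mem_Icc] at hi
    have e1 : (2 * i - 1) % 2 = 1 := by omega
    have e2 : (2 * i - 1 + 1) / 2 = i := by omega
    have e3 : (2 * i) % 2 = 0 := by omega
    have e4 : 2 * i - 1 + 1 = 2 * i := by omega
    rw [e1, e2, e3, e4]
    simp only [show (0:ℕ) ≠ 1 by decide, if_true, if_false, pow_zero, mul_one]
    rw [mul_pow]
    have hb1 : b i ≤ a (2 * i - 1) := le_trans (hbm i) (ha i (by rw [Finset.mem_Icc]; omega))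
    have hb2 : b i ≤ a (2 * i) := hbm i
    exact mul_dvd_mul (pow_dvd_pow _ hb1) (pow_dvd_pow _ hb2)
end

section
/- Let n ≥ 2 and let a = (a_1,…,a_n) be a vector of nonnegative integers such that a_j ≥ a_{j−1} − a_{j−2} + ⋯ + (−1)^{i−1} a_{j−i} + ⋯ + (−1)^{j−2} a_1 for each j = 2, …, n. Suppose y = (y_1,…,y_{n−1}) is a vector of nonnegative real numbers satisfying y_1 ≤ a_1, y_{j−1} + y_j ≤ a_j for each j = 2, …, n−1, and y_{n−1} ≤ a_n. Let h = ⌈y_1 + ⋯ + y_{n−1}⌉. Then the monomial x^a = x_1^{a_1} ⋯ x_n^{a_n} is divisible by a product of h monomials from the set {x_1 x_2, x_2 x_3, …, x_{n−1} x_n}. -/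
/-!
With partial sums `S_i = y_1 + ⋯ + y_i`, take `c_i = ⌈S_i⌉ - ⌈S_{i-1}⌉`. These telescope to `h`,
and since `⌈s + k⌉ = ⌈s⌉ + k` for `s ≥ 0` and integral `k`, `c_{j-1} + c_j = ⌈S_j⌉ - ⌈S_{j-2}⌉ ≤ a_j`
whenever `y_{j-1} + y_j ≤ a_j` (and likewise at the two ends). The product `∏ (x_i x_{i+1})^{c_i}`
has exponent `c_{j-1} + c_j` at `x_j`, so it divides `x^a`.
-/

open MvPolynomial Finset

lemma ceil_sub_ceil_le_of_le_add {R : Type*} [Semiring R] [LinearOrder R] [IsStrictOrderedRing R]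
    [FloorSemiring R] {s t : R} {k : ℕ} (hs : 0 ≤ s) (h : t ≤ s + k) : ⌈t⌉₊ - ⌈s⌉₊ ≤ k := by
  have := (Nat.ceil_mono h).trans_eq (Nat.ceil_add_natCast hs k)
  omega

section CeilIncrement

variable (y : ℕ → ℝ)

def partialSum (j : ℕ) : ℝ := ∑ i ∈ Icc 1 j, y i

noncomputable def ceilIncrement (i : ℕ) : ℕ := ⌈partialSum y i⌉₊ - ⌈partialSum y (i - 1)⌉₊

lemma partialSum_succ (j : ℕ) : partialSum y (j + 1) = partialSum y j + y (j + 1) :=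
  sum_Icc_succ_top (by omega) y

@[simp]
lemma ceilIncrement_zero : ceilIncrement y 0 = 0 := by
  simp [ceilIncrement]

lemma ceilIncrement_succ (i : ℕ) :
    ceilIncrement y (i + 1) = ⌈partialSum y (i + 1)⌉₊ - ⌈partialSum y i⌉₊ :=
  rfl

variable {y} {m : ℕ}

lemma partialSum_nonneg (hy : ∀ i ∈ Icc 1 m, 0 ≤ y i) {j : ℕ} (hj : j ≤ m) :
    0 ≤ partialSum y j :=
  sum_nonneg fun i hi => hy i (mem_Icc.2 ⟨(mem_Icc.1 hi).1, (mem_Icc.1 hi).2.trans hj⟩)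

lemma ceil_partialSum_le_succ (hy : ∀ i ∈ Icc 1 m, 0 ≤ y i) {j : ℕ} (hj : j < m) :
    ⌈partialSum y j⌉₊ ≤ ⌈partialSum y (j + 1)⌉₊ := by
  have := hy (j + 1) (mem_Icc.2 ⟨by omega, hj⟩)
  exact Nat.ceil_mono (by rw [partialSum_succ]; linarith)

lemma sum_ceilIncrement (hy : ∀ i ∈ Icc 1 m, 0 ≤ y i) {k : ℕ} (hk : k ≤ m) :
    ∑ i ∈ Icc 1 k, ceilIncrement y i = ⌈partialSum y k⌉₊ := by
  induction k with
  | zero => simp [partialSum]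
  | succ k ih =>
    rw [sum_Icc_succ_top (by omega), ih (by omega), ceilIncrement_succ]
    have := ceil_partialSum_le_succ hy hk
    omega

lemma ceilIncrement_succ_le (hy : ∀ i ∈ Icc 1 m, 0 ≤ y i) {i b : ℕ} (hi : i ≤ m)
    (hb : y (i + 1) ≤ b) : ceilIncrement y (i + 1) ≤ b := by
  rw [ceilIncrement_succ]
  refine ceil_sub_ceil_le_of_le_add (partialSum_nonneg hy hi) ?_
  rw [partialSum_succ]
  linarith

lemma ceilIncrement_succ_add_succ_le (hy : ∀ i ∈ Icc 1 m, 0 ≤ y i) {i b : ℕ} (hi : i + 2 ≤ m)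
    (hb : y (i + 1) + y (i + 2) ≤ b) : ceilIncrement y (i + 1) + ceilIncrement y (i + 2) ≤ b := by
  have hmono₁ := ceil_partialSum_le_succ hy (j := i) (by omega)
  have hmono₂ := ceil_partialSum_le_succ hy (j := i + 1) (by omega)
  have hsum : ⌈partialSum y (i + 1 + 1)⌉₊ - ⌈partialSum y i⌉₊ ≤ b := by
    refine ceil_sub_ceil_le_of_le_add (partialSum_nonneg hy (by omega)) ?_
    rw [partialSum_succ, partialSum_succ]
    linarith
  rw [ceilIncrement_succ, ceilIncrement_succ]
  omega

end CeilIncrement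

section PathMonomials

variable {R : Type*} [CommSemiring R]

lemma prod_X_mul_X_pow_eq {c : ℕ → ℕ} (hc0 : c 0 = 0) (m : ℕ) :
    ∏ i ∈ Icc 1 m, ((X i * X (i + 1) : MvPolynomial ℕ R) ^ c i) =
      (∏ i ∈ Icc 1 m, (X i : MvPolynomial ℕ R) ^ (c (i - 1) + c i)) * X (m + 1) ^ c m := by
  induction m with
  | zero => simp [hc0]
  | succ m ih =>
    rw [prod_Icc_succ_top (by omega), prod_Icc_succ_top (by omega), ih, Nat.add_sub_cancel,
      pow_add, mul_pow]
    ring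

lemma prod_X_mul_X_pow_dvd_prod_X_pow {a c : ℕ → ℕ} {m : ℕ} (hc0 : c 0 = 0)
    (hc : ∀ i ∈ Icc 1 m, c (i - 1) + c i ≤ a i) (hm : c m ≤ a (m + 1)) :
    ∏ i ∈ Icc 1 m, ((X i * X (i + 1) : MvPolynomial ℕ R) ^ c i) ∣
      ∏ i ∈ Icc 1 (m + 1), (X i : MvPolynomial ℕ R) ^ a i := by
  rw [prod_X_mul_X_pow_eq hc0, prod_Icc_succ_top (by omega)]
  exact mul_dvd_mul (prod_dvd_prod_of_dvd _ _ fun i hi => pow_dvd_pow _ (hc i hi))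
    (pow_dvd_pow _ hm)

end PathMonomials

theorem divisible_of_alternating_conditions_short_general
    (K : Type*) [Field K] (n : ℕ) (hn : 2 ≤ n)
    (a : ℕ → ℕ) (y : ℕ → ℝ)
    (hy0 : ∀ i ∈ Finset.Icc 1 (n - 1), 0 ≤ y i)
    (hy1 : y 1 ≤ (a 1 : ℝ))
    (hy2 : ∀ j ∈ Finset.Icc 2 (n - 1), y (j - 1) + y j ≤ (a j : ℝ))
    (hy3 : y (n - 1) ≤ (a n : ℝ)) :
    ∃ c : ℕ → ℕ,
      (∑ i ∈ Finset.Icc 1 (n - 1), c i = ⌈∑ i ∈ Finset.Icc 1 (n - 1), y i⌉₊) ∧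
      (∏ i ∈ Finset.Icc 1 (n - 1), ((X i * X (i + 1) : MvPolynomial ℕ K) ^ c i)) ∣
        ∏ i ∈ Finset.Icc 1 n, (X i : MvPolynomial ℕ K) ^ a i := by
  obtain ⟨m, rfl⟩ : ∃ m, n = m + 2 := ⟨n - 2, by omega⟩
  simp only [Nat.reduceSubDiff] at hy0 hy2 hy3 ⊢
  refine ⟨ceilIncrement y, sum_ceilIncrement hy0 le_rfl, ?_⟩
  refine prod_X_mul_X_pow_dvd_prod_X_pow (ceilIncrement_zero y) (fun i hi => ?_)
    (ceilIncrement_succ_le hy0 m.le_succ hy3)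
  obtain ⟨hi1, him⟩ := mem_Icc.1 hi
  rcases hi1.eq_or_lt with rfl | hi2
  · simpa using ceilIncrement_succ_le hy0 (i := 0) (by omega) (by simpa using hy1)
  · obtain ⟨j, rfl⟩ : ∃ j, i = j + 2 := ⟨i - 2, by omega⟩
    exact ceilIncrement_succ_add_succ_le hy0 (by omega)
      (by simpa using hy2 (j + 2) (mem_Icc.2 ⟨by omega, him⟩))

/-- Lemma 4.5(1): let `n ≥ 2` and `a = (a_1,…,a_n)` nonnegative integers with
`a_j ≥ a_{j-1} - a_{j-2} + ⋯ + (-1)^{j-2} a_1` for `j = 2,…,n`. If `y = (y_1,…,y_{n-1})`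
are nonnegative reals with `y_1 ≤ a_1`, `y_{j-1} + y_j ≤ a_j` for `j = 2,…,n-1`, and
`y_{n-1} ≤ a_n`, and `h = ⌈y_1 + ⋯ + y_{n-1}⌉`, then `x^a` is divisible by a product of
`h` monomials from `{x_1 x_2, …, x_{n-1} x_n}`. -/
theorem divisible_of_alternating_conditions_short
    (K : Type*) [Field K] (n : ℕ) (hn : 2 ≤ n)
    (a : ℕ → ℕ) (y : ℕ → ℝ)
    (ha : ∀ j ∈ Finset.Icc 2 n,
      (∑ i ∈ Finset.Icc 1 (j - 1), (-1 : ℤ) ^ (i - 1) * (a (j - i) : ℤ)) ≤ (a j : ℤ))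
    (hy0 : ∀ i ∈ Finset.Icc 1 (n - 1), 0 ≤ y i)
    (hy1 : y 1 ≤ (a 1 : ℝ))
    (hy2 : ∀ j ∈ Finset.Icc 2 (n - 1), y (j - 1) + y j ≤ (a j : ℝ))
    (hy3 : y (n - 1) ≤ (a n : ℝ)) :
    ∃ c : ℕ → ℕ,
      (∑ i ∈ Finset.Icc 1 (n - 1), c i = ⌈∑ i ∈ Finset.Icc 1 (n - 1), y i⌉₊) ∧
      (∏ i ∈ Finset.Icc 1 (n - 1), ((X i * X (i + 1) : MvPolynomial ℕ K) ^ c i)) ∣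
        ∏ i ∈ Finset.Icc 1 n, (X i : MvPolynomial ℕ K) ^ a i :=
  divisible_of_alternating_conditions_short_general K n hn a y hy0 hy1 hy2 hy3
end

section
/- Let n ≥ 3 and let a = (a_1,…,a_n) be a vector of nonnegative integers such that a_j ≥ a_{j−1} − a_{j−2} + ⋯ + (−1)^{i−1} a_{j−i} + ⋯ + (−1)^{j−2} a_1 for each j = 2, …, n−1, and a_n ≤ a_{n−1} − a_{n−2} + ⋯ + (−1)^{i−1} a_{n−i} + ⋯ + (−1)^{n−2} a_1. Suppose y = (y_1,…,y_{n−1}) is a vector of nonnegative real numbers satisfying y_1 ≤ a_1, y_{j−1} + y_j ≤ a_j for each j = 2, …, n−1, and y_{n−1} ≤ a_n. Let h = ⌈y_1 + ⋯ + y_{n−1}⌉. Then the monomial x^a = x_1^{a_1} ⋯ x_n^{a_n} is divisible by a product of h monomials from the set {x_1 x_2, x_2 x_3, …, x_{n−1} x_n}. -/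
/-!
Write `S j = y 1 + ⋯ + y j` and round the partial sums up: `c j = ⌈S j⌉ - ⌈S (j - 1)⌉`.
These telescope to `⌈S (n - 1)⌉`, and `c (j - 1) + c j = ⌈S j⌉ - ⌈S (j - 2)⌉ ≤ a j` because
`S j - S (j - 2) = y (j - 1) + y j ≤ a j` (similarly at both ends). These bounds say exactly that
every variable `x j` occurs in `∏ (x j * x (j + 1)) ^ c j` at most `a j` times.
-/

open MvPolynomial Finset

section ChainDivisibility

variable {M : Type*} [CommMonoid M] (g : ℕ → M) {c : ℕ → ℕ}

theorem prod_Icc_mul_succ_pow_eq (hc : c 0 = 0) (m : ℕ) :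
    ∏ i ∈ Icc 1 m, (g i * g (i + 1)) ^ c i =
      (∏ j ∈ Icc 1 m, g j ^ (c (j - 1) + c j)) * g (m + 1) ^ c m := by
  induction m with
  | zero => simp [hc]
  | succ m ih =>
    rw [prod_Icc_succ_top (by omega), prod_Icc_succ_top (by omega), ih, Nat.add_sub_cancel,
      pow_add, mul_pow]
    ac_rfl

theorem prod_Icc_mul_succ_pow_dvd {a : ℕ → ℕ} (hc : c 0 = 0) {m : ℕ}
    (h : ∀ j ∈ Icc 1 m, c (j - 1) + c j ≤ a j) (hm : c m ≤ a (m + 1)) :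
    ∏ i ∈ Icc 1 m, (g i * g (i + 1)) ^ c i ∣ ∏ j ∈ Icc 1 (m + 1), g j ^ a j := by
  rw [prod_Icc_mul_succ_pow_eq g hc, prod_Icc_succ_top (by omega)]
  exact mul_dvd_mul (prod_dvd_prod_of_dvd _ _ fun j hj ↦ pow_dvd_pow _ (h j hj))
    (pow_dvd_pow _ hm)

end ChainDivisibility

theorem Nat.ceil_le_ceil_add_of_sub_le {R : Type*} [Ring R] [LinearOrder R]
    [IsStrictOrderedRing R] [FloorRing R] {u v : R} {k : ℕ} (h : u - v ≤ k) : ⌈u⌉₊ ≤ ⌈v⌉₊ + k :=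
  calc ⌈u⌉₊ = ⌈v + (u - v)⌉₊ := by rw [add_sub_cancel]
    _ ≤ ⌈v⌉₊ + ⌈u - v⌉₊ := Nat.ceil_add_le _ _
    _ ≤ ⌈v⌉₊ + k := by gcongr; exact Nat.ceil_le.mpr h

theorem Finset.sum_Icc_tsub_pred_add_eq {C : ℕ → ℕ} {m : ℕ}
    (hC : ∀ j < m, C j ≤ C (j + 1)) : ∑ i ∈ Icc 1 m, (C i - C (i - 1)) + C 0 = C m := by
  induction m with
  | zero => simp
  | succ m ih =>
    rw [sum_Icc_succ_top (by omega), Nat.add_sub_cancel]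
    have := ih fun j hj ↦ hC j (by omega)
    have := hC m (by omega)
    omega

theorem exists_nat_of_adjacent_sum_le {y : ℕ → ℝ} {a : ℕ → ℕ} {m : ℕ}
    (hy0 : ∀ i ∈ Icc 1 m, 0 ≤ y i) (hy1 : y 1 ≤ a 1)
    (hy2 : ∀ j ∈ Icc 2 m, y (j - 1) + y j ≤ a j) (hy3 : y m ≤ a (m + 1)) :
    ∃ c : ℕ → ℕ, c 0 = 0 ∧ ∑ i ∈ Icc 1 m, c i = ⌈∑ i ∈ Icc 1 m, y i⌉₊ ∧
      (∀ j ∈ Icc 1 m, c (j - 1) + c j ≤ a j) ∧ c m ≤ a (m + 1) := by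
  set S : ℕ → ℝ := fun j ↦ ∑ i ∈ Icc 1 j, y i with hS
  set C : ℕ → ℕ := fun j ↦ ⌈S j⌉₊ with hC
  have hS_succ (j : ℕ) : S (j + 1) = S j + y (j + 1) := sum_Icc_succ_top (by omega) _
  have hC_mono {i j : ℕ} (hij : i ≤ j) (hj : j ≤ m) : C i ≤ C j :=
    Nat.ceil_le_ceil <| sum_le_sum_of_subset_of_nonneg (Icc_subset_Icc le_rfl hij)
      fun k hk _ ↦ hy0 k (mem_Icc.mpr ⟨(mem_Icc.mp hk).1, (mem_Icc.mp hk).2.trans hj⟩)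
  have hC_pair : ∀ j ∈ Icc 1 m, C j ≤ C (j - 2) + a j := by
    intro j hj
    obtain rfl | ⟨k, rfl⟩ : j = 1 ∨ ∃ k, j = k + 2 := by
      rcases mem_Icc.mp hj with ⟨h1, -⟩
      exact (eq_or_lt_of_le h1).imp Eq.symm fun _ ↦ ⟨j - 2, by omega⟩
    · exact Nat.ceil_le_ceil_add_of_sub_le (by simpa [hS] using hy1)
    · have hy : y (k + 1) + y (k + 2) ≤ a (k + 2) :=
        hy2 (k + 2) (mem_Icc.mpr ⟨by omega, (mem_Icc.mp hj).2⟩)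
      have hsplit : S (k + 2) = S k + y (k + 1) + y (k + 2) := by rw [hS_succ, hS_succ]
      exact Nat.ceil_le_ceil_add_of_sub_le (by rw [Nat.add_sub_cancel, hsplit]; linarith)
  have hC_last : C m ≤ C (m - 1) + a (m + 1) := by
    cases m with
    | zero => simp
    | succ k => exact Nat.ceil_le_ceil_add_of_sub_le (by simpa [hS_succ] using hy3)
  refine ⟨fun j ↦ C j - C (j - 1), by simp, ?_, ?_, ?_⟩
  · have h := sum_Icc_tsub_pred_add_eq fun j hj ↦ hC_mono (Nat.le_succ j) hj
    simpa [hC, hS] using h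
  · intro j hj
    have hjm := (mem_Icc.mp hj).2
    have := hC_pair j hj
    have := hC_mono (i := j - 2) (j := j - 1) (by omega) (by omega)
    have := hC_mono (i := j - 1) (j := j) (by omega) hjm
    simp only [show j - 1 - 1 = j - 2 by omega]
    omega
  · have := hC_mono (i := m - 1) (j := m) (by omega) le_rfl
    dsimp only
    omega

theorem divisible_of_alternating_conditions_short'_general
    (K : Type*) [Field K] (n : ℕ)
    (a : ℕ → ℕ) (y : ℕ → ℝ)
    (hy0 : ∀ i ∈ Finset.Icc 1 (n - 1), 0 ≤ y i)
    (hy1 : y 1 ≤ (a 1 : ℝ))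
    (hy2 : ∀ j ∈ Finset.Icc 2 (n - 1), y (j - 1) + y j ≤ (a j : ℝ))
    (hy3 : y (n - 1) ≤ (a n : ℝ)) :
    ∃ c : ℕ → ℕ,
      (∑ i ∈ Finset.Icc 1 (n - 1), c i = ⌈∑ i ∈ Finset.Icc 1 (n - 1), y i⌉₊) ∧
      (∏ i ∈ Finset.Icc 1 (n - 1), ((X i * X (i + 1) : MvPolynomial ℕ K) ^ c i)) ∣
        ∏ i ∈ Finset.Icc 1 n, (X i : MvPolynomial ℕ K) ^ a i := by
  cases n with
  | zero => exact ⟨0, by simp⟩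
  | succ m =>
    simp only [Nat.add_sub_cancel] at *
    obtain ⟨c, hc0, hsum, hpair, hlast⟩ := exists_nat_of_adjacent_sum_le hy0 hy1 hy2 hy3
    exact ⟨c, hsum, prod_Icc_mul_succ_pow_dvd _ hc0 hpair hlast⟩

/-- Lemma 4.5(2): let `n ≥ 3` and `a = (a_1,…,a_n)` nonnegative integers with
`a_j ≥ a_{j-1} - a_{j-2} + ⋯ + (-1)^{j-2} a_1` for `j = 2,…,n-1` and
`a_n ≤ a_{n-1} - a_{n-2} + ⋯ + (-1)^{n-2} a_1`. If `y = (y_1,…,y_{n-1})` are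
nonnegative reals with `y_1 ≤ a_1`, `y_{j-1} + y_j ≤ a_j` for `j = 2,…,n-1`, and
`y_{n-1} ≤ a_n`, and `h = ⌈y_1 + ⋯ + y_{n-1}⌉`, then `x^a` is divisible by a product
of `h` monomials from `{x_1 x_2, …, x_{n-1} x_n}`. -/
theorem divisible_of_alternating_conditions_short'
    (K : Type*) [Field K] (n : ℕ) (hn : 3 ≤ n)
    (a : ℕ → ℕ) (y : ℕ → ℝ)
    (ha1 : ∀ j ∈ Finset.Icc 2 (n - 1),
      (∑ i ∈ Finset.Icc 1 (j - 1), (-1 : ℤ) ^ (i - 1) * (a (j - i) : ℤ)) ≤ (a j : ℤ))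
    (ha2 : (a n : ℤ) ≤ ∑ i ∈ Finset.Icc 1 (n - 1), (-1 : ℤ) ^ (i - 1) * (a (n - i) : ℤ))
    (hy0 : ∀ i ∈ Finset.Icc 1 (n - 1), 0 ≤ y i)
    (hy1 : y 1 ≤ (a 1 : ℝ))
    (hy2 : ∀ j ∈ Finset.Icc 2 (n - 1), y (j - 1) + y j ≤ (a j : ℝ))
    (hy3 : y (n - 1) ≤ (a n : ℝ)) :
    ∃ c : ℕ → ℕ,
      (∑ i ∈ Finset.Icc 1 (n - 1), c i = ⌈∑ i ∈ Finset.Icc 1 (n - 1), y i⌉₊) ∧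
      (∏ i ∈ Finset.Icc 1 (n - 1), ((X i * X (i + 1) : MvPolynomial ℕ K) ^ c i)) ∣
        ∏ i ∈ Finset.Icc 1 n, (X i : MvPolynomial ℕ K) ^ a i :=
  divisible_of_alternating_conditions_short'_general K n a y hy0 hy1 hy2 hy3
end
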